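/- arXiv:1001.1504 — 8 statements merged into one kernel-verified Lean document; each statement's English description precedes it below -/
import Mathlib

section
/- For a prime p, setting q_p(kp) = 0 for multiples of p, we have #{u ∈ {0,...,p^2-1} : q_p(u) ≡ u (mod p)} = 2p - 1. -/
/-- The Fermat quotient `q_p(u)`: the unique integer in `[0, p-1]` congruent to
`(u^(p-1) - 1)/p` modulo `p` when `gcd(u,p) = 1`, and `0` on multiples of `p`. -/
def fermatQuotient (p : ℕ) (u : ℤ) : ℤ :=
  if (p : ℤ) ∣ u then 0 else ((u ^ (p - 1) - 1) / (p : ℤ)) % (p : ℤ)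

/-- Binomial expansion modulo `b^2`. -/
lemma binom_sq_dvd (a b : ℤ) (n : ℕ) :
    b ^ 2 ∣ (a + b) ^ (n + 1) - a ^ (n + 1) - ((n : ℤ) + 1) * a ^ n * b := by
  induction n with
  | zero => simp
  | succ n ih =>
    obtain ⟨c, hc⟩ := ih
    refine ⟨(a + b) * c + ((n : ℤ) + 1) * a ^ n, ?_⟩
    push_cast
    linear_combination (a + b) * hc

lemma dvd_iff_of_dvd_sub {n a b : ℤ} (h : n ∣ a - b) : n ∣ a ↔ n ∣ b :=
  ⟨fun ha => by simpa using dvd_sub ha h, fun hb => by simpa using dvd_add h hb⟩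

lemma prime_int {p : ℕ} (hp : p.Prime) : Prime (p : ℤ) :=
  Int.prime_iff_natAbs_prime.mpr (by simpa using hp)

lemma coprime_of_not_dvd {p : ℕ} (hp : p.Prime) {u : ℤ} (h : ¬ (p : ℤ) ∣ u) :
    IsCoprime u (p : ℤ) :=
  (((prime_int hp).coprime_iff_not_dvd).mpr h).symm

/-- For `0 < v < p` there is exactly one `k < p` making `v + p*k` a fixed residue. -/
lemma inner_card (p : ℕ) (hp : p.Prime) (v : ℕ) (hv : 0 < v) (hvp : v < p) :
    ((Finset.range p).filter
      (fun k => fermatQuotient p ((v + p * k : ℕ) : ℤ) ≡ ((v + p * k : ℕ) : ℤ)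
        [ZMOD (p : ℤ)])).card = 1 := by
  haveI : Fact p.Prime := ⟨hp⟩
  have hp0 : (p : ℤ) ≠ 0 := by exact_mod_cast hp.ne_zero
  have hp2 : 2 ≤ p := hp.two_le
  have hpv : ¬ (p : ℤ) ∣ (v : ℤ) := by
    intro h
    rw [Int.natCast_dvd_natCast] at h
    exact absurd (Nat.le_of_dvd hv h) (by omega)
  -- Fermat for v
  have hfv : (p : ℤ) ∣ (v : ℤ) ^ (p - 1) - 1 := by
    have := Int.ModEq.pow_card_sub_one_eq_one hp (coprime_of_not_dvd hp hpv)
    exact dvd_sub_comm.mp (Int.ModEq.dvd this)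
  set F : ℤ := ((v : ℤ) ^ (p - 1) - 1) / p with hFdef
  have hF : (p : ℤ) * F = (v : ℤ) ^ (p - 1) - 1 := by
    rw [hFdef, mul_comm]; exact Int.ediv_mul_cancel hfv
  have hVne : ((v : ℕ) : ZMod p) ≠ 0 := by
    rw [Ne, ZMod.natCast_eq_zero_iff]
    intro h; exact absurd (Nat.le_of_dvd hv h) (by omega)
  have hVp : ((v : ℕ) : ZMod p) ^ (p - 2) ≠ 0 := pow_ne_zero _ hVne
  set k0 : ZMod p := (((v : ℕ) : ZMod p) ^ (p - 2))⁻¹ *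
      (((F : ℤ) : ZMod p) - ((v : ℕ) : ZMod p)) with hk0
  -- the key characterization
  have key : ∀ k : ℕ, k < p →
      ((fermatQuotient p ((v + p * k : ℕ) : ℤ) ≡ ((v + p * k : ℕ) : ℤ) [ZMOD (p : ℤ)])
        ↔ (k : ZMod p) = k0) := by
    intro k hk
    set u : ℤ := ((v + p * k : ℕ) : ℤ) with hu
    have hu' : u = (v : ℤ) + (p : ℤ) * k := by rw [hu]; push_cast; ring
    have hpu : ¬ (p : ℤ) ∣ u := by
      intro h
      rw [hu'] at h
      have : (p : ℤ) ∣ (v : ℤ) := by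
        simpa using dvd_sub h ⟨(k : ℤ), rfl⟩
      exact hpv this
    -- Fermat for u
    have hfu : (p : ℤ) ∣ u ^ (p - 1) - 1 := by
      have := Int.ModEq.pow_card_sub_one_eq_one hp (coprime_of_not_dvd hp hpu)
      exact dvd_sub_comm.mp (Int.ModEq.dvd this)
    have hfq : fermatQuotient p u = ((u ^ (p - 1) - 1) / p) % p := if_neg hpu
    -- step A : drop the outer % p
    have stepA : (fermatQuotient p u ≡ u [ZMOD (p : ℤ)])
        ↔ ((u ^ (p - 1) - 1) / p ≡ u [ZMOD (p : ℤ)]) := by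
      rw [hfq]
      constructor
      · intro h
        exact (Int.ModEq.symm (Int.emod_emod_of_dvd _ dvd_rfl)).trans h
      · intro h
        exact (Int.emod_emod_of_dvd _ dvd_rfl).trans h
    -- step B : multiply through by p
    have stepB : ((u ^ (p - 1) - 1) / p ≡ u [ZMOD (p : ℤ)])
        ↔ (p : ℤ) * p ∣ (p : ℤ) * u - (u ^ (p - 1) - 1) := by
      rw [Int.modEq_iff_dvd]
      constructor
      · intro h
        have := mul_dvd_mul_left (p : ℤ) h
        rwa [mul_sub, mul_comm (p : ℤ) ((u ^ (p - 1) - 1) / p),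
          Int.ediv_mul_cancel hfu] at this
      · intro h
        have h2 : (p : ℤ) * u - (u ^ (p - 1) - 1)
            = (p : ℤ) * (u - (u ^ (p - 1) - 1) / p) := by
          rw [mul_sub, mul_comm (p : ℤ) ((u ^ (p - 1) - 1) / p), Int.ediv_mul_cancel hfu]
        rw [h2] at h
        exact (mul_dvd_mul_iff_left hp0).mp h
    -- step C : binomial expansion
    have hbin : (p : ℤ) * p ∣ u ^ (p - 1) - (v : ℤ) ^ (p - 1)
        - (((p - 2 : ℕ) : ℤ) + 1) * (v : ℤ) ^ (p - 2) * ((p : ℤ) * k) := by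
      have hb := binom_sq_dvd (v : ℤ) ((p : ℤ) * k) (p - 2)
      rw [show p - 2 + 1 = p - 1 by omega] at hb
      have hdvd : (p : ℤ) * p ∣ ((p : ℤ) * k) ^ 2 := ⟨k ^ 2, by ring⟩
      rw [← hu'] at hb
      exact dvd_trans hdvd hb
    set c : ℤ := (((p - 2 : ℕ) : ℤ) + 1) * (v : ℤ) ^ (p - 2) with hc
    have stepC : (p : ℤ) * p ∣ (p : ℤ) * u - (u ^ (p - 1) - 1)
        ↔ (p : ℤ) * p ∣ (p : ℤ) * ((v : ℤ) - F - c * k) := by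
      apply dvd_iff_of_dvd_sub
      have : ((p : ℤ) * u - (u ^ (p - 1) - 1)) - (p : ℤ) * ((v : ℤ) - F - c * k)
          = (p : ℤ) * p * k
            - (u ^ (p - 1) - (v : ℤ) ^ (p - 1) - c * ((p : ℤ) * k)) := by
        rw [hu']; linear_combination hF
      rw [this]
      exact dvd_sub ⟨k, rfl⟩ hbin
    have stepD : (p : ℤ) * p ∣ (p : ℤ) * ((v : ℤ) - F - c * k)
        ↔ (p : ℤ) ∣ ((v : ℤ) - F - c * k) := mul_dvd_mul_iff_left hp0
    -- transfer to ZMod p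
    have stepE : (p : ℤ) ∣ ((v : ℤ) - F - c * k)
        ↔ (k : ZMod p) = k0 := by
      rw [← ZMod.intCast_zmod_eq_zero_iff_dvd]
      have hcast : ((((v : ℤ) - F - c * k) : ℤ) : ZMod p)
          = ((v : ℕ) : ZMod p) - ((F : ℤ) : ZMod p)
            + ((v : ℕ) : ZMod p) ^ (p - 2) * ((k : ℕ) : ZMod p) := by
        have hpc : (((p - 2 : ℕ) : ZMod p) + 1) = -1 := by
          have : ((p : ℕ) : ZMod p) = 0 := ZMod.natCast_self p
          have h2 : ((p - 2 : ℕ) : ZMod p) = ((p : ℕ) : ZMod p) - 2 := by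
            rw [Nat.cast_sub hp2]; norm_num
          rw [h2, this]; ring
        rw [hc]; push_cast
        rw [hpc]; ring
      rw [hcast, hk0]
      constructor
      · intro h
        have h' : ((v : ℕ) : ZMod p) ^ (p - 2) * ((k : ℕ) : ZMod p)
            = ((F : ℤ) : ZMod p) - ((v : ℕ) : ZMod p) := by linear_combination h
        rw [← h', inv_mul_cancel_left₀ hVp]
      · intro h
        rw [h, mul_inv_cancel_left₀ hVp]
        ring
    rw [stepA, stepB, stepC, stepD, stepE]
  -- now count
  rw [Finset.card_eq_one]
  refine ⟨k0.val, ?_⟩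
  rw [Finset.eq_singleton_iff_unique_mem]
  constructor
  · rw [Finset.mem_filter, Finset.mem_range]
    have hlt : k0.val < p := ZMod.val_lt k0
    exact ⟨hlt, (key k0.val hlt).mpr (ZMod.natCast_rightInverse k0)⟩
  · intro k hk
    rw [Finset.mem_filter, Finset.mem_range] at hk
    have := (key k hk.1).mp hk.2
    rw [← this, ZMod.val_cast_of_lt hk.1]

theorem card_fixed_residues (p : ℕ) (hp : p.Prime) :
    ((Finset.range (p ^ 2)).filter
      (fun u : ℕ => fermatQuotient p (u : ℤ) ≡ (u : ℤ) [ZMOD (p : ℤ)])).card = 2 * p - 1 := by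
  haveI : Fact p.Prime := ⟨hp⟩
  have hp2 : 2 ≤ p := hp.two_le
  have key : ((Finset.range (p ^ 2)).filter
        (fun u : ℕ => fermatQuotient p (u : ℤ) ≡ (u : ℤ) [ZMOD (p : ℤ)])).card
      = ∑ v ∈ Finset.range p, ((Finset.range p).filter
          (fun k => fermatQuotient p ((v + p * k : ℕ) : ℤ) ≡ ((v + p * k : ℕ) : ℤ)
            [ZMOD (p : ℤ)])).card := by
    rw [Finset.card_filter]
    have hconv : ∀ v ∈ Finset.range p,
        ((Finset.range p).filter (fun k => fermatQuotient p ((v + p * k : ℕ) : ℤ)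
            ≡ ((v + p * k : ℕ) : ℤ) [ZMOD (p : ℤ)])).card
        = ∑ k ∈ Finset.range p,
            if fermatQuotient p ((v + p * k : ℕ) : ℤ) ≡ ((v + p * k : ℕ) : ℤ) [ZMOD (p : ℤ)]
            then 1 else 0 := by
      intro v _; rw [Finset.card_filter]
    rw [Finset.sum_congr rfl hconv, ← Finset.sum_product']
    apply Finset.sum_nbij' (fun u => ((u % p, u / p) : ℕ × ℕ)) (fun x => x.1 + p * x.2)
    · intro u hu
      simp only [Finset.mem_range, pow_two] at hu
      simp only [Finset.mem_product, Finset.mem_range]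
      exact ⟨Nat.mod_lt _ hp.pos, (Nat.div_lt_iff_lt_mul hp.pos).2 (by omega)⟩
    · intro x hx
      simp only [Finset.mem_product, Finset.mem_range] at hx
      simp only [Finset.mem_range, pow_two]
      calc x.1 + p * x.2 < p + p * x.2 := by omega
        _ = p * (x.2 + 1) := by ring
        _ ≤ p * p := Nat.mul_le_mul_left _ (by omega)
    · intro u _; exact Nat.mod_add_div u p
    · intro x hx
      simp only [Finset.mem_product, Finset.mem_range] at hx
      have h1 : (x.1 + p * x.2) % p = x.1 := by
        rw [Nat.add_mul_mod_self_left, Nat.mod_eq_of_lt hx.1]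
      have h2 : (x.1 + p * x.2) / p = x.2 := by
        rw [Nat.add_mul_div_left _ _ hp.pos, Nat.div_eq_of_lt hx.1]; omega
      simp [h1, h2]
    · intro u _; rw [Nat.mod_add_div u p]
  rw [key]
  have h0mem : 0 ∈ Finset.range p := Finset.mem_range.mpr (by omega)
  rw [← Finset.add_sum_erase _ _ h0mem]
  have h0 : ((Finset.range p).filter (fun k => fermatQuotient p ((0 + p * k : ℕ) : ℤ)
      ≡ ((0 + p * k : ℕ) : ℤ) [ZMOD (p : ℤ)])).card = p := by
    have htrue : ∀ k ∈ Finset.range p, fermatQuotient p ((0 + p * k : ℕ) : ℤ)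
        ≡ ((0 + p * k : ℕ) : ℤ) [ZMOD (p : ℤ)] := by
      intro k _
      have hdvd : (p : ℤ) ∣ ((0 + p * k : ℕ) : ℤ) := by push_cast; exact ⟨k, by ring⟩
      rw [fermatQuotient, if_pos hdvd]
      exact (Int.modEq_iff_dvd.2 (by simp [hdvd]))
    rw [Finset.filter_true_of_mem htrue, Finset.card_range]
  have h1 : ∑ v ∈ (Finset.range p).erase 0, ((Finset.range p).filter
      (fun k => fermatQuotient p ((v + p * k : ℕ) : ℤ) ≡ ((v + p * k : ℕ) : ℤ)
        [ZMOD (p : ℤ)])).card = p - 1 := by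
    rw [Finset.sum_congr rfl (fun v hv => ?_), Finset.sum_const, smul_eq_mul, mul_one,
      Finset.card_erase_of_mem h0mem, Finset.card_range]
    rw [Finset.mem_erase, Finset.mem_range] at hv
    exact inner_card p hp v (Nat.pos_of_ne_zero hv.1) hv.2
  rw [h0, h1]
  omega
end

section
/- Let p be a prime and let Q(p,a) denote the number of primes ℓ with 1 ≤ ℓ ≤ p-1 such that q_p(ℓ) = a. Then the sum over a from 0 to p-1 of Q(p,a)^2 is at most π(p-1) + p - 2, where π denotes the prime counting function. -/
/-- `Q(p,a)`: the number of primes `ℓ` with `1 ≤ ℓ ≤ p-1` and `q_p(ℓ) = a`. -/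
def Qcount (p : ℕ) (a : ℕ) : ℕ :=
  ((Finset.Icc 1 (p - 1)).filter
    (fun l : ℕ => l.Prime ∧ fermatQuotient p (l : ℤ) = (a : ℤ))).card

/-! Distinct primes `l ≠ r` below `p` with `q_p(l) = q_p(r)` give, since
`l ^ (p - 1) ≡ 1 + p q_p(l) (mod p²)`, an element `w = l / r ≠ 1` of `ZMod (p²)` with
`w ^ (p - 1) = 1`. Different pairs give different `w`: `l r' ≡ l' r (mod p²)` is an equality
of integers below `p²`, and as `l ≠ r` are primes, `l ∣ l' r` forces `l = l'`, hence `r = r'`.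
As the units of `ZMod (p²)` form a cyclic group, there are at most `p - 2` such `w`; the
diagonal pairs add `π(p - 1)`. -/

open Finset

theorem Finset.sum_sq_card_filter_eq_le {α β γ : Type*} [DecidableEq α] [DecidableEq β]
    (s : Finset α) (t : Finset γ) (f : α → β) {g : γ → β} (hg : Function.Injective g) :
    ∑ c ∈ t, #{x ∈ s | f x = g c} ^ 2 ≤ #s + #{x ∈ s.offDiag | f x.1 = f x.2} := by
  set fiber : γ → Finset α := fun c ↦ {x ∈ s | f x = g c}
  have hdisj : (t : Set γ).PairwiseDisjoint fun c ↦ fiber c ×ˢ fiber c := by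
    intro c _ d _ hcd
    simp only [Function.onFun, disjoint_left, mem_product, mem_filter, fiber]
    rintro x ⟨⟨-, hc⟩, -⟩ ⟨⟨-, hd⟩, -⟩
    exact hcd (hg (hc.symm.trans hd))
  have hsub : t.biUnion (fun c ↦ fiber c ×ˢ fiber c) ⊆
      s.diag ∪ {x ∈ s.offDiag | f x.1 = f x.2} := by
    intro x
    simp only [mem_biUnion, mem_product, mem_filter, mem_union,
      mem_diag, mem_offDiag, fiber]
    rintro ⟨c, -, ⟨h1, hc1⟩, h2, hc2⟩
    by_cases h : x.1 = x.2
    · exact Or.inl ⟨h1, h⟩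
    · exact Or.inr ⟨⟨h1, h2, h⟩, hc1.trans hc2.symm⟩
  calc ∑ c ∈ t, #(fiber c) ^ 2 = #(t.biUnion fun c ↦ fiber c ×ˢ fiber c) := by
        simp only [card_biUnion hdisj, card_product, sq]
    _ ≤ #(s.diag ∪ {x ∈ s.offDiag | f x.1 = f x.2}) := card_le_card hsub
    _ ≤ #s + #{x ∈ s.offDiag | f x.1 = f x.2} := by
        rw [← diag_card s]; exact card_union_le _ _

theorem IsCyclic.card_pow_eq_one_ne_one_le {G : Type*} [Group G] [Fintype G] [DecidableEq G]
    [IsCyclic G] {n : ℕ} (hn : 0 < n) : #{a : G | a ^ n = 1 ∧ a ≠ 1} ≤ n - 1 := by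
  have herase : ({a : G | a ^ n = 1 ∧ a ≠ 1} : Finset G) =
      ({a : G | a ^ n = 1} : Finset G).erase 1 := by
    ext a; simp [and_comm]
  rw [herase, card_erase_of_mem (by simp)]
  exact Nat.sub_le_sub_right (IsCyclic.card_pow_eq_one_le hn) 1

theorem card_pow_eq_one_ne_one_le_of_isCyclic_units {M : Type*} [Monoid M] [Fintype M]
    [DecidableEq M] [IsCyclic Mˣ] {n : ℕ} (hn : 0 < n) :
    #{x : M | x ^ n = 1 ∧ x ≠ 1} ≤ n - 1 := by
  refine le_trans (card_le_card_of_surjOn (fun u : Mˣ ↦ (u : M)) ?_)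
    (IsCyclic.card_pow_eq_one_ne_one_le hn)
  rintro x hx
  simp only [coe_filter, mem_univ, true_and, Set.mem_ofPred_eq] at hx
  obtain ⟨u, rfl⟩ := IsUnit.of_pow_eq_one hx.1 hn.ne'
  refine ⟨u, ?_, rfl⟩
  simp only [coe_filter, mem_univ, true_and, Set.mem_ofPred_eq]
  exact ⟨Units.ext (by simpa using hx.1), fun h ↦ hx.2 (by simp [h])⟩

theorem ZMod.natCast_injOn_Iio (n : ℕ) : Set.InjOn (Nat.cast : ℕ → ZMod n) (Set.Iio n) :=
  fun a ha b hb h ↦ by rw [← ZMod.val_natCast_of_lt ha, ← ZMod.val_natCast_of_lt hb, h]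

theorem ZMod.isCyclic_units_prime_sq {p : ℕ} (hp : p.Prime) : IsCyclic (ZMod (p ^ 2))ˣ := by
  obtain rfl | hp2 := eq_or_ne p 2
  · exact ZMod.isCyclic_units_four
  · exact ZMod.isCyclic_units_of_prime_pow p hp hp2 2

theorem Nat.Prime.eq_and_eq_of_mul_eq_mul {l r l' r' : ℕ} (hl : l.Prime) (hr : r.Prime)
    (hl' : l'.Prime) (hlr : l ≠ r) (h : l * r' = l' * r) : l = l' ∧ r = r' := by
  have hll' : l = l' := by
    rcases (Nat.Prime.dvd_mul hl).mp (h ▸ dvd_mul_right l r') with h' | h'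
    · exact (Nat.prime_dvd_prime_iff_eq hl hl').mp h'
    · exact absurd ((Nat.prime_dvd_prime_iff_eq hl hr).mp h') hlr
  subst hll'
  exact ⟨rfl, (Nat.eq_of_mul_eq_mul_left hl.pos h).symm⟩

theorem intCast_pow_eq_one_add_mul_fermatQuotient {p : ℕ} (hp : p.Prime) {u : ℤ}
    (hu : ¬ (p : ℤ) ∣ u) :
    ((u ^ (p - 1) : ℤ) : ZMod (p ^ 2)) = 1 + p * fermatQuotient p u := by
  set k := (u ^ (p - 1) - 1) / p
  have hcop : IsCoprime u p := ((Nat.prime_iff_prime_int.mp hp).coprime_iff_not_dvd.mpr hu).symm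
  have hk : u ^ (p - 1) = 1 + p * k := by
    linarith [Int.ediv_mul_cancel (Int.ModEq.pow_card_sub_one_eq_one hp hcop).symm.dvd]
  have hdecomp : u ^ (p - 1) = 1 + p * (k % p) + (p : ℤ) ^ 2 * (k / p) := by
    rw [hk]; linear_combination (p : ℤ) * (Int.emod_add_mul_ediv k p).symm
  have hq : fermatQuotient p u = k % p := if_neg hu
  rw [hq, hdecomp]
  push_cast
  rw [← Nat.cast_pow, ZMod.natCast_self, zero_mul, add_zero]

theorem intCast_pow_eq_of_fermatQuotient_eq {p : ℕ} (hp : p.Prime) {u v : ℤ}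
    (hu : ¬ (p : ℤ) ∣ u) (hv : ¬ (p : ℤ) ∣ v)
    (h : fermatQuotient p u = fermatQuotient p v) :
    (u : ZMod (p ^ 2)) ^ (p - 1) = (v : ZMod (p ^ 2)) ^ (p - 1) := by
  have hu' := intCast_pow_eq_one_add_mul_fermatQuotient hp hu
  have hv' := intCast_pow_eq_one_add_mul_fermatQuotient hp hv
  push_cast at hu' hv'
  rw [hu', hv', h]

theorem Qcount_eq_card_filter (p a : ℕ) :
    Qcount p a = #{l ∈ p.primesBelow | fermatQuotient p (l : ℕ) = a} := by
  rw [Qcount]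
  congr 1
  ext l
  simp only [mem_filter, mem_Icc, Nat.mem_primesBelow]
  constructor
  · rintro ⟨⟨h1, h2⟩, hl, hq⟩; exact ⟨⟨by omega, hl⟩, hq⟩
  · rintro ⟨⟨hlt, hl⟩, hq⟩; exact ⟨⟨hl.one_lt.le, by omega⟩, hl, hq⟩

section PrimesBelow

variable {p l r l' r' : ℕ}

theorem isUnit_natCast_of_mem_primesBelow (hp : p.Prime) (hl : l ∈ p.primesBelow) :
    IsUnit (l : ZMod (p ^ 2)) := by
  obtain ⟨hlp, hl⟩ := Nat.mem_primesBelow.mp hl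
  exact (ZMod.isUnit_iff_coprime l _).mpr
    ((Nat.coprime_of_lt_prime hl.ne_zero hlp hp).symm.pow_right 2)

theorem natCast_mul_inv_mul_cancel (hp : p.Prime) (hr : r ∈ p.primesBelow) (l : ℕ) :
    (l : ZMod (p ^ 2)) * (r : ZMod (p ^ 2))⁻¹ * r = l := by
  rw [mul_assoc, ZMod.inv_mul_of_unit _ (isUnit_natCast_of_mem_primesBelow hp hr), mul_one]

theorem natCast_mul_inv_pow_eq_one_of_fermatQuotient_eq (hp : p.Prime)
    (hl : l ∈ p.primesBelow) (hr : r ∈ p.primesBelow)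
    (hq : fermatQuotient p l = fermatQuotient p r) :
    ((l : ZMod (p ^ 2)) * (r : ZMod (p ^ 2))⁻¹) ^ (p - 1) = 1 := by
  have hndvd : ∀ m ∈ p.primesBelow, ¬ (p : ℤ) ∣ (m : ℤ) := fun m hm ↦
    Int.natCast_dvd_natCast.not.mpr <| Nat.not_dvd_of_pos_of_lt
      (Nat.prime_of_mem_primesBelow hm).pos (Nat.lt_of_mem_primesBelow hm)
  have hpow : (l : ZMod (p ^ 2)) ^ (p - 1) = (r : ZMod (p ^ 2)) ^ (p - 1) := by
    exact_mod_cast intCast_pow_eq_of_fermatQuotient_eq hp (hndvd l hl) (hndvd r hr) hq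
  apply ((isUnit_natCast_of_mem_primesBelow hp hr).pow (p - 1)).mul_right_cancel
  rw [← mul_pow, natCast_mul_inv_mul_cancel hp hr, hpow, one_mul]

theorem natCast_mul_inv_ne_one_of_ne (hp : p.Prime) (hl : l ∈ p.primesBelow)
    (hr : r ∈ p.primesBelow) (hne : l ≠ r) :
    (l : ZMod (p ^ 2)) * (r : ZMod (p ^ 2))⁻¹ ≠ 1 := by
  intro h
  have hlt : ∀ m ∈ p.primesBelow, m < p ^ 2 := fun m hm ↦
    (Nat.lt_of_mem_primesBelow hm).trans_le (Nat.le_self_pow two_ne_zero p)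
  refine hne (ZMod.natCast_injOn_Iio _ (hlt l hl) (hlt r hr) ?_)
  rw [← natCast_mul_inv_mul_cancel hp hr l, h, one_mul]

theorem eq_of_natCast_mul_inv_eq (hp : p.Prime) (hl : l ∈ p.primesBelow)
    (hr : r ∈ p.primesBelow) (hl' : l' ∈ p.primesBelow) (hr' : r' ∈ p.primesBelow)
    (hne : l ≠ r)
    (h : (l : ZMod (p ^ 2)) * (r : ZMod (p ^ 2))⁻¹ = l' * (r' : ZMod (p ^ 2))⁻¹) :
    l = l' ∧ r = r' := by
  have hmul_lt : ∀ a ∈ p.primesBelow, ∀ b ∈ p.primesBelow, a * b < p ^ 2 :=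
    fun _ ha _ hb ↦ sq p ▸
      Nat.mul_lt_mul'' (Nat.lt_of_mem_primesBelow ha) (Nat.lt_of_mem_primesBelow hb)
  have hcross : ((l * r' : ℕ) : ZMod (p ^ 2)) = (l' * r : ℕ) := by
    push_cast
    rw [← natCast_mul_inv_mul_cancel hp hr l, ← natCast_mul_inv_mul_cancel hp hr' l', h]
    ring
  exact Nat.Prime.eq_and_eq_of_mul_eq_mul (Nat.prime_of_mem_primesBelow hl)
    (Nat.prime_of_mem_primesBelow hr) (Nat.prime_of_mem_primesBelow hl') hne
    (ZMod.natCast_injOn_Iio _ (hmul_lt l hl r' hr') (hmul_lt l' hl' r hr) hcross)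

theorem card_offDiag_filter_fermatQuotient_eq_le (hp : p.Prime) :
    #{x ∈ p.primesBelow.offDiag | fermatQuotient p (x.1 : ℕ) = fermatQuotient p (x.2 : ℕ)}
      ≤ p - 2 := by
  have : NeZero (p ^ 2) := ⟨pow_ne_zero 2 hp.ne_zero⟩
  have := ZMod.isCyclic_units_prime_sq hp
  calc _ ≤ #{w : ZMod (p ^ 2) | w ^ (p - 1) = 1 ∧ w ≠ 1} := by
        refine card_le_card_of_injOn
          (fun x ↦ (x.1 : ZMod (p ^ 2)) * (x.2 : ZMod (p ^ 2))⁻¹) ?_ ?_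
        · intro x hx
          simp only [coe_filter, mem_offDiag, Set.mem_ofPred_eq] at hx
          obtain ⟨⟨hl, hr, hne⟩, hq⟩ := hx
          simp only [coe_filter, mem_univ, true_and, Set.mem_ofPred_eq]
          exact ⟨natCast_mul_inv_pow_eq_one_of_fermatQuotient_eq hp hl hr hq,
            natCast_mul_inv_ne_one_of_ne hp hl hr hne⟩
        · intro x hx y hy hxy
          simp only [coe_filter, mem_offDiag, Set.mem_ofPred_eq] at hx hy
          obtain ⟨⟨hl, hr, hne⟩, -⟩ := hx
          obtain ⟨⟨hl', hr', -⟩, -⟩ := hy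
          obtain ⟨h1, h2⟩ := eq_of_natCast_mul_inv_eq hp hl hr hl' hr' hne hxy
          exact Prod.ext h1 h2
    _ ≤ p - 1 - 1 := card_pow_eq_one_ne_one_le_of_isCyclic_units (by have := hp.two_le; omega)
    _ = p - 2 := by omega

end PrimesBelow

theorem sum_sq_Qcount_le (p : ℕ) (hp : p.Prime) :
    ∑ a ∈ Finset.range p, (Qcount p a) ^ 2 ≤ Nat.primeCounting (p - 1) + p - 2 := by
  calc ∑ a ∈ range p, (Qcount p a) ^ 2
      = ∑ a ∈ range p, #{l ∈ p.primesBelow | fermatQuotient p (l : ℕ) = a} ^ 2 := by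
        simp only [Qcount_eq_card_filter]
    _ ≤ #p.primesBelow + #{x ∈ p.primesBelow.offDiag |
          fermatQuotient p (x.1 : ℕ) = fermatQuotient p (x.2 : ℕ)} :=
        sum_sq_card_filter_eq_le _ _ _ Nat.cast_injective
    _ ≤ Nat.primeCounting (p - 1) + (p - 2) := by
        rw [Nat.primesBelow_card_eq_primeCounting', ← Nat.primeCounting_sub_one]
        exact Nat.add_le_add_left (card_offDiag_filter_fermatQuotient_eq_le hp) _
    _ = Nat.primeCounting (p - 1) + p - 2 := by have := hp.two_le; omega
end

section
/- Let p be a prime and let U(p;k,h) denote the number of u ∈ {0,...,p-1} for which q_p(u) ≡ z (mod p) for some z ∈ [k+1, k+h]. Then U(p;k,h) ≤ h^{1/2} · p^{1/2 + o(1)} as p → ∞; more precisely, U(p;k,h)^2 ≤ C_ε · h · p^{1+ε} for any ε > 0 and a constant C_ε depending only on ε. -/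
open Finset

theorem Prime.pow_dvd_sub_of_pow_dvd_pow_sub_pow {R : Type*} [CommRing R] [IsDomain R]
    {p x y : R} (hp : Prime p) {n : ℕ} (hxy : p ∣ x - y) (hx : ¬p ∣ n * x ^ (n - 1)) {k : ℕ}
    (h : p ^ k ∣ x ^ n - y ^ n) : p ^ k ∣ x - y :=
  hp.pow_dvd_of_dvd_mul_left k (mt (dvd_geom_sum₂_iff_of_dvd_sub' hxy).mp hx)
    (by rwa [geom_sum₂_mul])

theorem sq_card_le_sum_card_divisors {S W : Finset ℕ} (hS : 0 ∉ S)
    (hmul : ∀ u ∈ S, ∀ v ∈ S, u * v ∈ W) : #S ^ 2 ≤ ∑ w ∈ W, #w.divisors := by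
  rw [sq, ← card_product, ← card_sigma]
  refine card_le_card_of_injOn (fun x => ⟨x.1 * x.2, x.1⟩) (fun x hx => ?_) ?_
  · obtain ⟨hu, hv⟩ := mem_product.mp hx
    have hv0 : x.2 ≠ 0 := fun h => hS (h ▸ hv)
    have hu0 : x.1 ≠ 0 := fun h => hS (h ▸ hu)
    exact mem_sigma.mpr
      ⟨hmul _ hu _ hv, Nat.mem_divisors.mpr ⟨dvd_mul_right _ _, mul_ne_zero hu0 hv0⟩⟩
  · rintro ⟨u, v⟩ hx ⟨u', v'⟩ _ heq
    simp only [Sigma.mk.injEq] at heq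
    obtain ⟨hprod, rfl⟩ := heq
    have hu0 : u ≠ 0 := fun h => hS (h ▸ (mem_product.mp hx).1)
    rw [Nat.mul_left_cancel (Nat.pos_of_ne_zero hu0) hprod]

theorem add_one_le_mul_two_rpow {ε : ℝ} (hε : 0 < ε) {a : ℝ} (ha : 0 ≤ a) :
    a + 1 ≤ max 1 (1 / (ε * Real.log 2)) * 2 ^ (a * ε) := by
  have hlog : 0 < ε * Real.log 2 := mul_pos hε (Real.log_pos one_lt_two)
  have hB : 1 ≤ max 1 (1 / (ε * Real.log 2)) * (ε * Real.log 2) := by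
    calc (1 : ℝ) = 1 / (ε * Real.log 2) * (ε * Real.log 2) := by field_simp
      _ ≤ _ := by gcongr; exact le_max_right _ _
  have hexp : 1 + a * (ε * Real.log 2) ≤ 2 ^ (a * ε) := by
    rw [Real.rpow_def_of_pos two_pos]
    linarith [Real.add_one_le_exp (Real.log 2 * (a * ε))]
  nlinarith [le_max_left 1 (1 / (ε * Real.log 2))]

theorem add_one_le_rpow_mul_of_two_le_rpow {q ε : ℝ} (hq : 0 ≤ q) (h2 : 2 ≤ q ^ ε) (a : ℕ) :
    (a + 1 : ℝ) ≤ q ^ ((a : ℝ) * ε) := by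
  calc (a + 1 : ℝ) ≤ 2 ^ a := by exact_mod_cast Nat.lt_two_pow_self
    _ ≤ (q ^ ε) ^ a := pow_le_pow_left₀ zero_le_two h2 a
    _ = q ^ ((a : ℝ) * ε) := by rw [← Real.rpow_natCast, ← Real.rpow_mul hq, mul_comm]

theorem Nat.cast_rpow_eq_prod_primeFactors {n : ℕ} (hn : n ≠ 0) (s : ℝ) :
    (n : ℝ) ^ s = ∏ q ∈ n.primeFactors, (q : ℝ) ^ ((n.factorization q : ℝ) * s) := by
  conv_lhs => rw [← Nat.prod_factorization_pow_eq_self hn]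
  rw [Nat.prod_factorization_eq_prod_primeFactors, Nat.cast_prod,
    ← Real.finsetProd_rpow _ _ fun q _ => by positivity]
  refine prod_congr rfl fun q _ => ?_
  rw [Nat.cast_pow, ← Real.rpow_natCast, ← Real.rpow_mul (Nat.cast_nonneg q)]

theorem exists_card_divisors_le_mul_rpow {ε : ℝ} (hε : 0 < ε) :
    ∃ C > 0, ∀ n : ℕ, (#n.divisors : ℝ) ≤ C * n ^ ε := by
  set B := max 1 (1 / (ε * Real.log 2))
  have hB : 1 ≤ B := le_max_left _ _
  -- Every prime `q > N` has `q ^ ε ≥ 2`; only the primes `q ≤ N` cost a factor `B`.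
  set N := ⌈(2 : ℝ) ^ (1 / ε)⌉₊
  refine ⟨B ^ (N + 1), by positivity, fun n => ?_⟩
  rcases eq_or_ne n 0 with rfl | hn
  · simp [Real.zero_rpow hε.ne']
  have hlocal : ∀ q ∈ n.primeFactors, ((n.factorization q + 1 : ℕ) : ℝ) ≤
      (if q ≤ N then B else 1) * (q : ℝ) ^ ((n.factorization q : ℝ) * ε) := by
    intro q hq
    have hq2 : (2 : ℝ) ≤ q := by exact_mod_cast (Nat.prime_of_mem_primeFactors hq).two_le
    push_cast
    split_ifs with hqN
    · calc _ ≤ B * 2 ^ ((n.factorization q : ℝ) * ε) := add_one_le_mul_two_rpow hε (by positivity)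
        _ ≤ B * (q : ℝ) ^ ((n.factorization q : ℝ) * ε) := by gcongr
    · rw [one_mul]
      refine add_one_le_rpow_mul_of_two_le_rpow (by positivity) ?_ _
      calc (2 : ℝ) = (2 ^ (1 / ε)) ^ ε := by
            rw [← Real.rpow_mul zero_le_two, one_div_mul_cancel hε.ne', Real.rpow_one]
        _ ≤ (q : ℝ) ^ ε := by
            gcongr
            exact (Nat.le_ceil _).trans (by exact_mod_cast (not_le.mp hqN).le)
  have hsmall : ∏ q ∈ n.primeFactors, (if q ≤ N then B else 1) ≤ B ^ (N + 1) := by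
    rw [← prod_filter, prod_const]
    refine pow_le_pow_right₀ hB ((card_le_card fun q hq => ?_).trans_eq (card_range _))
    exact mem_range.mpr (Nat.lt_succ_of_le (mem_filter.mp hq).2)
  calc (#n.divisors : ℝ) = ∏ q ∈ n.primeFactors, ((n.factorization q + 1 : ℕ) : ℝ) := by
        rw [Nat.card_divisors hn, Nat.cast_prod]
    _ ≤ ∏ q ∈ n.primeFactors, (if q ≤ N then B else 1) * (q : ℝ) ^ ((n.factorization q : ℝ) * ε) :=
        prod_le_prod (fun _ _ => by positivity) hlocal
    _ = (∏ q ∈ n.primeFactors, if q ≤ N then B else 1) * (n : ℝ) ^ ε := by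
        rw [prod_mul_distrib, Nat.cast_rpow_eq_prod_primeFactors hn]
    _ ≤ B ^ (N + 1) * (n : ℝ) ^ ε := by gcongr

section FermatQuotient

variable {p : ℕ}

theorem mul_fermatQuotient_modEq (hp : p.Prime) {u : ℤ} (hu : ¬(p : ℤ) ∣ u) :
    p * fermatQuotient p u ≡ u ^ (p - 1) - 1 [ZMOD p ^ 2] := by
  have hp' : Prime (p : ℤ) := Nat.prime_iff_prime_int.mp hp
  obtain ⟨a, ha⟩ := Int.prime_dvd_pow_sub_one hp (hp'.coprime_iff_not_dvd.mpr hu).symm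
  rw [fermatQuotient, if_neg hu, ha, Int.mul_ediv_cancel_left _ hp'.ne_zero, sq]
  exact (Int.mod_modEq a p).mul_left'

theorem fermatQuotient_mul (hp : p.Prime) {u v : ℤ} (hu : ¬(p : ℤ) ∣ u) (hv : ¬(p : ℤ) ∣ v) :
    fermatQuotient p (u * v) ≡ fermatQuotient p u + fermatQuotient p v [ZMOD p] := by
  have hp' : Prime (p : ℤ) := Nat.prime_iff_prime_int.mp hp
  have huv : ¬(p : ℤ) ∣ u * v := fun h => (hp'.dvd_or_dvd h).elim hu hv
  obtain ⟨a, ha⟩ := Int.prime_dvd_pow_sub_one hp (hp'.coprime_iff_not_dvd.mpr hu).symm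
  obtain ⟨b, hb⟩ := Int.prime_dvd_pow_sub_one hp (hp'.coprime_iff_not_dvd.mpr hv).symm
  -- `(uv)^(p-1) - 1 = A + B + AB` with `p ∣ A, B`, so the cross term vanishes modulo `p ^ 2`.
  have hcross : (u * v) ^ (p - 1) - 1 ≡ (u ^ (p - 1) - 1) + (v ^ (p - 1) - 1) [ZMOD p ^ 2] := by
    refine Int.modEq_iff_dvd.mpr ⟨-(a * b), ?_⟩
    rw [mul_pow]
    linear_combination (-(v ^ (p - 1)) + 1) * ha - (p * a) * hb
  refine Int.ModEq.mul_left_cancel' (c := p) (by exact_mod_cast hp.ne_zero) ?_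
  rw [← sq, mul_add]
  exact (mul_fermatQuotient_modEq hp huv).trans
    (hcross.trans ((mul_fermatQuotient_modEq hp hu).add (mul_fermatQuotient_modEq hp hv)).symm)

theorem modEq_sq_of_fermatQuotient_modEq (hp : p.Prime) {u v : ℤ} (hu : ¬(p : ℤ) ∣ u)
    (huv : u ≡ v [ZMOD p]) (hq : fermatQuotient p u ≡ fermatQuotient p v [ZMOD p]) :
    u ≡ v [ZMOD p ^ 2] := by
  have hp' : Prime (p : ℤ) := Nat.prime_iff_prime_int.mp hp
  have hv : ¬(p : ℤ) ∣ v := fun h => hu ((Int.ModEq.dvd_iff huv).mpr h)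
  have hpow : u ^ (p - 1) ≡ v ^ (p - 1) [ZMOD p ^ 2] := by
    have hq' : p * fermatQuotient p u ≡ p * fermatQuotient p v [ZMOD p ^ 2] := by
      rw [sq]; exact hq.mul_left'
    simpa using ((mul_fermatQuotient_modEq hp hu).symm.trans
      (hq'.trans (mul_fermatQuotient_modEq hp hv))).add_right 1
  have hndvd : ¬(p : ℤ) ∣ ((p - 1 : ℕ) : ℤ) * u ^ (p - 1 - 1) := by
    refine hp'.not_dvd_mul ?_ (fun h => hu (hp'.dvd_of_dvd_pow h))
    exact_mod_cast Nat.not_dvd_of_pos_of_lt (by have := hp.two_le; omega) (by have := hp.pos; omega)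
  exact Int.modEq_iff_dvd.mpr (by
    simpa using hp'.pow_dvd_sub_of_pow_dvd_pow_sub_pow (Int.ModEq.dvd huv.symm) hndvd
      (Int.ModEq.dvd hpow.symm) |>.neg_right)

theorem card_filter_fermatQuotient_modEq_le (hp : p.Prime) (z : ℤ) :
    #{w ∈ range (p ^ 2) | fermatQuotient p (w : ℕ) ≡ z [ZMOD p]} ≤ 2 * p := by
  set F := {w ∈ range (p ^ 2) | fermatQuotient p (w : ℕ) ≡ z [ZMOD p]}
  -- A unit modulo `p ^ 2` is determined by its residue modulo `p` and its Fermat quotient.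
  have hunits : #{w ∈ F | ¬(p : ℤ) ∣ (w : ℕ)} ≤ p := by
    refine (card_le_card_of_injOn (· % p) (fun w _ => mem_range.mpr (Nat.mod_lt w hp.pos))
      ?_).trans_eq (card_range p)
    intro w₁ h₁ w₂ h₂ hmod
    simp only [F, coe_filter, mem_filter, mem_range, Set.mem_ofPred_eq] at h₁ h₂
    have hsq := modEq_sq_of_fermatQuotient_modEq hp h₁.2 (Int.natCast_modEq_iff.mpr hmod)
      (h₁.1.2.trans h₂.1.2.symm)
    exact (Int.natCast_modEq_iff.mp (by exact_mod_cast hsq)).eq_of_lt_of_lt h₁.1.1 h₂.1.1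
  have hmultiples : #{w ∈ F | (p : ℤ) ∣ (w : ℕ)} ≤ p := by
    refine (card_le_card_of_injOn (· / p) (fun w hw => ?_) ?_).trans_eq (card_range p)
    · simp only [F, coe_filter, mem_filter, mem_range, Set.mem_ofPred_eq] at hw
      exact mem_range.mpr (Nat.div_lt_of_lt_mul (by rw [← sq]; exact hw.1.1))
    · intro w₁ h₁ w₂ h₂ hdiv
      simp only [F, coe_filter, mem_filter, mem_range, Set.mem_ofPred_eq, Int.natCast_dvd_natCast]
        at h₁ h₂
      rw [← Nat.div_mul_cancel h₁.2, ← Nat.div_mul_cancel h₂.2]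
      exact congrArg (· * p) hdiv
  have := card_filter_add_card_filter_not (s := F) (fun w : ℕ => (p : ℤ) ∣ w)
  omega

open Classical in
/-- With `n = p`, the set counted by `U(p; k, h)`. -/
noncomputable def fermatQuotientHits (p n : ℕ) (k : ℤ) (h : ℕ) : Finset ℕ :=
  {u ∈ range n | ∃ z : ℤ, k + 1 ≤ z ∧ z ≤ k + h ∧ fermatQuotient p u ≡ z [ZMOD p]}

theorem mem_fermatQuotientHits {n u : ℕ} {k : ℤ} {h : ℕ} :
    u ∈ fermatQuotientHits p n k h ↔
      u < n ∧ ∃ z : ℤ, k + 1 ≤ z ∧ z ≤ k + h ∧ fermatQuotient p u ≡ z [ZMOD p] := by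
  classical
  simp [fermatQuotientHits]

theorem card_fermatQuotientHits_sq_le (hp : p.Prime) (k : ℤ) (h : ℕ) :
    #(fermatQuotientHits p (p ^ 2) k h) ≤ h * (2 * p) := by
  classical
  have hsub : fermatQuotientHits p (p ^ 2) k h ⊆ (Icc (k + 1) (k + h)).biUnion
      fun z => {w ∈ range (p ^ 2) | fermatQuotient p (w : ℕ) ≡ z [ZMOD p]} := by
    intro w hw
    obtain ⟨hw, z, hz₁, hz₂, hz⟩ := mem_fermatQuotientHits.mp hw
    exact mem_biUnion.mpr ⟨z, mem_Icc.mpr ⟨hz₁, hz₂⟩, mem_filter.mpr ⟨mem_range.mpr hw, hz⟩⟩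
  calc #(fermatQuotientHits p (p ^ 2) k h)
      ≤ ∑ z ∈ Icc (k + 1) (k + h), #{w ∈ range (p ^ 2) | fermatQuotient p (w : ℕ) ≡ z [ZMOD p]} :=
        (card_le_card hsub).trans card_biUnion_le
    _ ≤ #(Icc (k + 1) (k + h)) * (2 * p) :=
        sum_le_card_nsmul _ _ _ fun z _ => card_filter_fermatQuotient_modEq_le hp z
    _ = h * (2 * p) := by simp

theorem mul_mem_fermatQuotientHits (hp : p.Prime) {m n u v : ℕ} {k : ℤ} {h : ℕ}
    (hu : u ∈ fermatQuotientHits p m k h) (hv : v ∈ fermatQuotientHits p n k h)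
    (hpu : ¬(p : ℤ) ∣ u) (hpv : ¬(p : ℤ) ∣ v) :
    u * v ∈ fermatQuotientHits p (m * n) (2 * k + 1) (2 * h) := by
  obtain ⟨hum, y, hy₁, hy₂, hy⟩ := mem_fermatQuotientHits.mp hu
  obtain ⟨hvn, z, hz₁, hz₂, hz⟩ := mem_fermatQuotientHits.mp hv
  refine mem_fermatQuotientHits.mpr ⟨Nat.mul_lt_mul'' hum hvn,
    y + z, by linarith, by push_cast; linarith, ?_⟩
  push_cast
  exact (fermatQuotient_mul hp hpu hpv).trans (hy.add hz)

end FermatQuotient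

theorem sq_card_fermatQuotientHits_erase_zero_le {p : ℕ} (hp : p.Prime) {C ε : ℝ} (hε : 0 ≤ ε)
    (hτ : ∀ n : ℕ, (#n.divisors : ℝ) ≤ C * n ^ (ε / 2)) (k : ℤ) (h : ℕ) :
    (#((fermatQuotientHits p p k h).erase 0) : ℝ) ^ 2 ≤ 4 * C * h * p ^ (1 + ε) := by
  set S := (fermatQuotientHits p p k h).erase 0
  set W := fermatQuotientHits p (p ^ 2) (2 * k + 1) (2 * h)
  have hp0 : (0 : ℝ) < p := by exact_mod_cast hp.pos
  have hC : 0 ≤ C := zero_le_one.trans (by simpa using hτ 1)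
  have hcoprime : ∀ u ∈ S, ¬(p : ℤ) ∣ u := fun u hu => by
    obtain ⟨hu0, hu⟩ := mem_erase.mp hu
    exact fun hdvd => Nat.not_dvd_of_pos_of_lt (Nat.pos_of_ne_zero hu0)
      (mem_fermatQuotientHits.mp hu).1 (Int.natCast_dvd_natCast.mp hdvd)
  have hmul : ∀ u ∈ S, ∀ v ∈ S, u * v ∈ W := fun u hu v hv => by
    simpa [W, sq] using mul_mem_fermatQuotientHits hp (mem_of_mem_erase hu)
      (mem_of_mem_erase hv) (hcoprime u hu) (hcoprime v hv)
  have hτW : ∀ w ∈ W, (#w.divisors : ℝ) ≤ C * p ^ ε := fun w hw => by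
    have hw : (w : ℝ) ≤ (p : ℝ) ^ (2 : ℝ) := by
      exact_mod_cast (mem_fermatQuotientHits.mp hw).1.le
    calc (#w.divisors : ℝ) ≤ C * w ^ (ε / 2) := hτ w
      _ ≤ C * ((p : ℝ) ^ (2 : ℝ)) ^ (ε / 2) := by gcongr
      _ = C * p ^ ε := by rw [← Real.rpow_mul hp0.le]; ring_nf
  have hW : (#W : ℝ) ≤ 2 * h * (2 * p) := by
    exact_mod_cast card_fermatQuotientHits_sq_le hp (2 * k + 1) (2 * h)
  calc (#S : ℝ) ^ 2 ≤ ∑ w ∈ W, (#w.divisors : ℝ) := by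
        exact_mod_cast sq_card_le_sum_card_divisors (notMem_erase 0 _) hmul
    _ ≤ #W * (C * p ^ ε) := by simpa using sum_le_card_nsmul W _ _ hτW
    _ ≤ 2 * h * (2 * p) * (C * p ^ ε) := by gcongr
    _ = 4 * C * h * p ^ (1 + ε) := by rw [Real.rpow_add hp0, Real.rpow_one]; ring

open Classical in
theorem concentration_bound :
    ∀ ε : ℝ, 0 < ε → ∃ C : ℝ, 0 < C ∧ ∀ p : ℕ, p.Prime → ∀ k : ℤ, ∀ h : ℕ, 1 ≤ h →
      ((((Finset.range p).filter (fun u : ℕ => ∃ z : ℤ, k + 1 ≤ z ∧ z ≤ k + h ∧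
          fermatQuotient p (u : ℤ) ≡ z [ZMOD (p : ℤ)])).card : ℝ)) ^ 2 ≤
        C * h * (p : ℝ) ^ ((1 : ℝ) + ε) := by
  intro ε hε
  obtain ⟨C, hC, hτ⟩ := exists_card_divisors_le_mul_rpow (half_pos hε)
  refine ⟨8 * C + 2, by positivity, fun p hp k h hh => ?_⟩
  change (#(fermatQuotientHits p p k h) : ℝ) ^ 2 ≤ _
  set S := fermatQuotientHits p p k h
  have hnonzero := sq_card_fermatQuotientHits_erase_zero_le hp hε.le hτ k h
  have hzero : (#S : ℝ) ≤ #(S.erase 0) + 1 := by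
    have := pred_card_le_card_erase (s := S) (a := 0)
    exact_mod_cast (by omega : #S ≤ #(S.erase 0) + 1)
  have hhp : 1 ≤ (h : ℝ) * p ^ (1 + ε) :=
    one_le_mul_of_one_le_of_one_le (by exact_mod_cast hh)
      (Real.one_le_rpow (by exact_mod_cast hp.one_lt.le) (by positivity))
  nlinarith [sq_nonneg ((#(S.erase 0) : ℝ) - 1)]
end

section
/- Let p be a prime, z a real number with 2 ≤ z < p, and u an integer with 1 ≤ u ≤ p-1. Then there exist integers v and w with u·v ≡ w (mod p), 0 < w ≤ p/z, and 0 < |v| ≤ z. -/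
/-!
Dirichlet's approximation theorem applied to `u / p` with `n = ⌊z⌋` gives `0 < k ≤ n` and `j`
with `|k u - j p| ≤ p / (n + 1) < p / z`. Since `p` is prime and divides neither `k` nor `u`,
`w = k u - j p` is nonzero; flipping the sign of `k` together with that of `w` makes `w` positive.
-/

theorem Int.exists_abs_mul_sub_mul_le (u : ℤ) {p : ℕ} (hp : 0 < p) {n : ℕ} (hn : 0 < n) :
    ∃ k j : ℤ, 0 < k ∧ k ≤ n ∧ |((k * u - j * p : ℤ) : ℝ)| ≤ p / (n + 1) := by
  obtain ⟨j, k, hk0, hkn, hjk⟩ := Real.exists_int_int_abs_mul_sub_le ((u : ℝ) / p) hn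
  have hp' : (0 : ℝ) < p := by exact_mod_cast hp
  refine ⟨k, j, hk0, hkn, ?_⟩
  calc |((k * u - j * p : ℤ) : ℝ)| = |(k : ℝ) * (u / p) - j| * p := by
        rw [← abs_of_pos hp', ← abs_mul, abs_of_pos hp']
        push_cast
        field_simp
    _ ≤ 1 / (n + 1) * p := by gcongr
    _ = p / (n + 1) := by ring

theorem Int.mul_sub_mul_ne_zero_of_prime {p : ℕ} (hp : p.Prime) {u : ℤ} (hu : ¬ (p : ℤ) ∣ u)
    {k : ℤ} (hk0 : 0 < k) (hkp : k < p) (j : ℤ) : k * u - j * p ≠ 0 := by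
  intro h
  have hdvd : (p : ℤ) ∣ k * u := ⟨j, by linarith⟩
  have hk : ¬ (p : ℤ) ∣ k := fun hd => absurd (Int.le_of_dvd hk0 hd) (not_le.mpr hkp)
  rcases (Nat.prime_iff_prime_int.mp hp).dvd_or_dvd hdvd with h | h
  · exact hk h
  · exact hu h

theorem Int.exists_mul_modEq_abs_of_ne_zero {u k w : ℤ} (m : ℤ) (hw : w ≠ 0)
    (h : u * k ≡ w [ZMOD m]) : ∃ v : ℤ, u * v ≡ |w| [ZMOD m] ∧ |v| = |k| := by
  refine ⟨w.sign * k, ?_, by rw [abs_mul, Int.abs_sign_of_ne_zero hw, one_mul]⟩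
  rw [← Int.sign_mul_self_eq_abs, mul_left_comm]
  exact h.mul_left _

theorem Nat.Prime.exists_mul_modEq_le {p : ℕ} (hp : p.Prime) {u : ℤ} (hu : ¬ (p : ℤ) ∣ u)
    {n : ℕ} (hn : 0 < n) (hnp : n < p) :
    ∃ v w : ℤ, u * v ≡ w [ZMOD p] ∧ 0 < w ∧ (w : ℝ) ≤ p / (n + 1) ∧ 0 < |v| ∧ |v| ≤ n := by
  obtain ⟨k, j, hk0, hkn, hbound⟩ := Int.exists_abs_mul_sub_mul_le u hp.pos hn
  have hw : k * u - j * p ≠ 0 := Int.mul_sub_mul_ne_zero_of_prime hp hu hk0 (by omega) j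
  have hmod : u * k ≡ k * u - j * p [ZMOD p] :=
    (Int.modEq_iff_dvd.mpr ⟨j, by ring⟩).symm
  obtain ⟨v, hv, hvk⟩ := Int.exists_mul_modEq_abs_of_ne_zero p hw hmod
  refine ⟨v, _, hv, abs_pos.mpr hw, by exact_mod_cast hbound, ?_, ?_⟩ <;>
    rw [hvk, abs_of_pos hk0]
  exacts [hk0, hkn]

theorem dirichlet_type_approx (p : ℕ) (hp : p.Prime) (z : ℝ)
    (hz2 : 2 ≤ z) (hzp : z < p) (u : ℕ) (hu1 : 1 ≤ u) (hup : u ≤ p - 1) :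
    ∃ v w : ℤ, (u : ℤ) * v ≡ w [ZMOD (p : ℤ)] ∧
      0 < w ∧ (w : ℝ) ≤ (p : ℝ) / z ∧ 0 < |v| ∧ (|v| : ℝ) ≤ z := by
  set n := ⌊z⌋₊
  have hn : 0 < n := Nat.floor_pos.mpr (by linarith)
  have hnz : (n : ℝ) ≤ z := Nat.floor_le (by linarith)
  have hzn : z < n + 1 := Nat.lt_floor_add_one z
  have hnp : n < p := by exact_mod_cast hnz.trans_lt hzp
  have hu : ¬ (p : ℤ) ∣ u := fun h => by
    have := Nat.le_of_dvd (by omega) (Int.natCast_dvd_natCast.mp h)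
    omega
  obtain ⟨v, w, hmod, hw0, hwn, hv0, hvn⟩ := hp.exists_mul_modEq_le hu hn hnp
  refine ⟨v, w, hmod, hw0, hwn.trans ?_, hv0, le_trans (by exact_mod_cast hvn) hnz⟩
  gcongr
end

section
/- Let p be a prime and suppose the sequence q_p(0), q_p(1), ..., q_p(N-1) with N ≤ p^2 satisfies a linear recurrence of order L over Z/pZ: there exist c_0, ..., c_{L-1} ∈ Z/pZ with q_p(u+L) ≡ c_{L-1}·q_p(u+L-1) + ... + c_0·q_p(u) (mod p) for all 0 ≤ u ≤ N-L-1. Then L ≥ (1/2)·min{p-1, N-p-1}. -/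
lemma binom_mod (P v : ℤ) : ∀ n : ℕ,
    (v + P) ^ (n + 1) ≡ v ^ (n + 1) + (n + 1) * v ^ n * P [ZMOD P ^ 2] := by
  intro n
  induction n with
  | zero => simp
  | succ n ih =>
    calc (v + P) ^ (n + 2) = (v + P) ^ (n + 1) * (v + P) := by ring
    _ ≡ (v ^ (n + 1) + (n + 1) * v ^ n * P) * (v + P) [ZMOD P ^ 2] := ih.mul_right _
    _ ≡ v ^ (n + 2) + (n + 2) * v ^ (n + 1) * P [ZMOD P ^ 2] := by
        rw [Int.ModEq]
        have : (v ^ (n + 1) + (n + 1) * v ^ n * P) * (v + P)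
            = v ^ (n + 2) + (n + 2) * v ^ (n + 1) * P + P ^ 2 * ((n+1) * v ^ n) := by
          ring
        rw [this]
        exact Int.add_mul_emod_self_left _ _ _

lemma fermat_dvd (p : ℕ) (hp : p.Prime) (v : ℤ) (hv : ¬ (p : ℤ) ∣ v) :
    (p : ℤ) ∣ v ^ (p - 1) - 1 := by
  haveI : Fact p.Prime := ⟨hp⟩
  rw [← ZMod.intCast_zmod_eq_zero_iff_dvd]
  push_cast
  rw [ZMod.pow_card_sub_one_eq_one (by rwa [Ne, ZMod.intCast_zmod_eq_zero_iff_dvd])]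
  ring

lemma fq_shift (p : ℕ) (hp : p.Prime) (hp3 : 3 ≤ p) (v : ℤ) :
    fermatQuotient p (v + p) ≡ fermatQuotient p v - v ^ (p - 2) [ZMOD (p : ℤ)] := by
  have hp0 : (p : ℤ) ≠ 0 := by exact_mod_cast hp.ne_zero
  by_cases hdvd : (p : ℤ) ∣ v
  · have hdvd2 : (p : ℤ) ∣ v + p := dvd_add hdvd dvd_rfl
    simp only [fermatQuotient, if_pos hdvd, if_pos hdvd2]
    have : (p : ℤ) ∣ v ^ (p - 2) := by
      have h1 : p - 2 = (p - 3) + 1 := by omega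
      rw [h1, pow_succ]
      exact Dvd.dvd.mul_left hdvd _
    exact Int.modEq_iff_dvd.mpr (by simpa using (dvd_neg.mpr this))
  · have hdvd2 : ¬ (p : ℤ) ∣ v + p := by
      intro h
      exact hdvd (by simpa using h.sub (dvd_refl (p : ℤ)))
    simp only [fermatQuotient, if_neg hdvd, if_neg hdvd2]
    have hA := fermat_dvd p hp v hdvd
    have hB := fermat_dvd p hp (v + p) hdvd2
    obtain ⟨A, hAe⟩ := hA
    obtain ⟨B, hBe⟩ := hB
    have e1 : (v ^ (p - 1) - 1) / (p : ℤ) = A := by rw [hAe]; exact Int.mul_ediv_cancel_left _ hp0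
    have e2 : ((v + p) ^ (p - 1) - 1) / (p : ℤ) = B := by
      rw [hBe]; exact Int.mul_ediv_cancel_left _ hp0
    rw [e1, e2]
    -- key : B ≡ A - v^(p-2) [ZMOD p]
    have hm : p - 1 = (p - 2) + 1 := by omega
    have key := binom_mod (p : ℤ) v (p - 2)
    rw [← hm] at key
    -- (v+p)^(p-1) ≡ v^(p-1) + (p-2+1) v^(p-2) p  [ZMOD p^2]
    have key2 : (v + p) ^ (p - 1) ≡ v ^ (p - 1) - v ^ (p - 2) * p [ZMOD (p:ℤ) ^ 2] := by
      refine key.trans ?_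
      have hc : ((p - 2 : ℕ) : ℤ) + 1 = (p : ℤ) - 1 := by
        have : (2 : ℕ) ≤ p := hp.two_le
        push_cast [Nat.cast_sub this]
        ring
      rw [hc]
      rw [Int.ModEq]
      have : v ^ (p - 1) + ((p : ℤ) - 1) * v ^ (p - 2) * p
          = v ^ (p - 1) - v ^ (p - 2) * p + (p:ℤ) ^ 2 * v ^ (p - 2) := by ring
      rw [this]
      exact Int.add_mul_emod_self_left _ _ _
    -- so p^2 ∣ (v+p)^(p-1) - v^(p-1) + v^(p-2) p, i.e. p ∣ B - (A - v^(p-2))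
    have hdd : (p : ℤ) ^ 2 ∣ (v ^ (p - 1) - v ^ (p - 2) * p) - (v + p) ^ (p - 1) :=
      (Int.ModEq.dvd key2)
    have hstep : (p : ℤ) ∣ (A - v ^ (p - 2)) - B := by
      have : (p : ℤ) * ((A - v ^ (p - 2)) - B)
          = (v ^ (p - 1) - v ^ (p - 2) * p) - (v + p) ^ (p - 1) := by
        have h1 : (p : ℤ) * A = v ^ (p - 1) - 1 := hAe.symm
        have h2 : (p : ℤ) * B = (v + p) ^ (p - 1) - 1 := hBe.symm
        ring_nf
        linear_combination h1 - h2
      rcases hdd with ⟨k, hk⟩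
      refine ⟨k, ?_⟩
      have := this.trans hk
      have hsq : (p : ℤ) ^ 2 = p * p := sq (p:ℤ)
      rw [hsq] at this
      exact mul_left_cancel₀ hp0 (by linarith [this])
    -- conclude with emod
    have h3 : B % (p : ℤ) ≡ B [ZMOD (p : ℤ)] := Int.emod_emod_of_dvd _ dvd_rfl
    have h4 : A % (p : ℤ) ≡ A [ZMOD (p : ℤ)] := Int.emod_emod_of_dvd _ dvd_rfl
    calc B % (p:ℤ) ≡ B [ZMOD (p:ℤ)] := h3
    _ ≡ A - v ^ (p-2) [ZMOD (p:ℤ)] := Int.modEq_iff_dvd.mpr hstep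
    _ ≡ A % (p:ℤ) - v ^ (p-2) [ZMOD (p:ℤ)] := (h4.symm).sub_right _

lemma cast_nat_inj {p a b : ℕ} (ha : a < p) (hb : b < p) (h : (a : ZMod p) = b) : a = b := by
  have := congrArg ZMod.val h
  rwa [ZMod.val_natCast_of_lt ha, ZMod.val_natCast_of_lt hb] at this

lemma cast_add_ne_zero {p : ℕ} (u j : ℕ) (h1 : 1 ≤ u + j) (h2 : u + j < p) :
    ((u : ZMod p) + (j : ZMod p)) ≠ 0 := by
  have he : (((u + j : ℕ)) : ZMod p) = (u : ZMod p) + (j : ZMod p) := by push_cast; ring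
  rw [← he]
  intro h
  have h0 : (0 : ℕ) < p := by omega
  have := cast_nat_inj h2 h0 (by simpa using h)
  omega

theorem linear_complexity_lower_bound (p N L : ℕ) (hp : p.Prime) (hN : N ≤ p ^ 2)
    (c : ℕ → ℤ)
    (hrec : ∀ u : ℕ, u ≤ N - L - 1 →
      fermatQuotient p ((u + L : ℕ) : ℤ) ≡
        ∑ j ∈ Finset.range L, c j * fermatQuotient p ((u + j : ℕ) : ℤ) [ZMOD (p : ℤ)]) :
    min (p - 1) (N - p - 1) ≤ 2 * L := by
  by_contra hcon
  push_neg at hcon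
  rw [lt_min_iff] at hcon
  obtain ⟨h1, h2⟩ := hcon
  haveI : Fact p.Prime := ⟨hp⟩
  have hple : 2 * L + 2 ≤ p := by omega
  have hNge : p + 2 * L + 2 ≤ N := by omega
  by_cases hp2 : p = 2
  · -- then L = 0 and N ≥ 4; contradiction via q_2(3) = 1
    subst hp2
    have hL : L = 0 := by omega
    subst hL
    have h3 := hrec 3 (by omega)
    simp only [Finset.range_zero, Finset.sum_empty] at h3
    norm_num [fermatQuotient, Int.ModEq] at h3
  · have hp3 : 3 ≤ p := by have := hp.two_le; omega
    haveI : NeZero p := ⟨by omega⟩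
    classical
    set d : ℕ → ZMod p := fun j => if j = L then -1 else (c j : ZMod p) with hd
    -- ZMod form of the shift
    have S : ∀ m : ℕ, ((fermatQuotient p ((m : ℤ) + (p : ℤ)) : ℤ) : ZMod p)
        = ((fermatQuotient p (m : ℤ) : ℤ) : ZMod p) - ((m : ZMod p)) ^ (p - 2) := by
      intro m
      have := (ZMod.intCast_eq_intCast_iff _ _ _).mpr (fq_shift p hp hp3 (m : ℤ))
      push_cast at this ⊢
      exact this
    -- inverse equation at points u = 1 .. L+1
    have hinv : ∀ x : ZMod p, x ≠ 0 → x ^ (p - 2) = x⁻¹ := by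
      intro x hx
      have he : x ^ (p - 2) * x = 1 := by
        rw [← pow_succ, show p - 2 + 1 = p - 1 from by omega]
        exact ZMod.pow_card_sub_one_eq_one hx
      exact eq_inv_of_mul_eq_one_left he
    have hkey : ∀ u : ℕ, 1 ≤ u → u ≤ L + 1 →
        ∑ j ∈ Finset.range (L + 1), d j * ((u : ZMod p) + (j : ℕ))⁻¹ = 0 := by
      intro u hu1 hu2
      have hA := hrec u (by omega)
      have hB := hrec (u + p) (by omega)
      simp only [Nat.add_right_comm u p] at hB
      have hA' := (ZMod.intCast_eq_intCast_iff _ _ _).mpr hA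
      have hB' := (ZMod.intCast_eq_intCast_iff _ _ _).mpr hB
      push_cast at hA' hB'
      rw [show ((u : ℤ) + (L : ℤ) + (p : ℤ)) = (((u + L : ℕ) : ℤ) + (p : ℤ)) from by push_cast; ring] at hB'
      rw [S (u + L)] at hB'
      have hBs : ∀ j ∈ Finset.range L,
          ((fermatQuotient p ((u : ℤ) + (j : ℤ) + (p : ℤ)) : ℤ) : ZMod p)
          = ((fermatQuotient p ((u : ℤ) + (j : ℤ)) : ℤ) : ZMod p)
            - ((u : ZMod p) + (j : ZMod p)) ^ (p - 2) := by
        intro j hj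
        have := S (u + j)
        push_cast at this
        exact this
      rw [Finset.sum_congr rfl (fun j hj => by rw [hBs j hj])] at hB'
      simp only [mul_sub] at hB'
      rw [Finset.sum_sub_distrib] at hB'
      push_cast at hB'
      -- now hB' : fqc(u+L) - (ū+L̄)^(p-2) = Σ c fqc - Σ c (ū+j̄)^(p-2)
      have hpow : ((u : ZMod p) + (L : ZMod p)) ^ (p - 2)
          = ∑ j ∈ Finset.range L, (c j : ZMod p) * ((u : ZMod p) + (j : ZMod p)) ^ (p - 2) := by
        push_cast at hA'
        linear_combination hA' - hB'
      -- rewrite powers as inverses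
      have hne : ∀ j : ℕ, j ≤ L → ((u : ZMod p) + (j : ZMod p)) ≠ 0 := fun j hj =>
        cast_add_ne_zero u j (by omega) (by omega)
      rw [Finset.sum_range_succ]
      simp only [hd, if_pos rfl]
      rw [Finset.sum_congr rfl (fun j hj => by
        rw [if_neg (by have := Finset.mem_range.mp hj; omega : j ≠ L)])]
      rw [← hinv _ (hne L le_rfl)]
      rw [Finset.sum_congr rfl (fun j hj => by
        rw [← hinv _ (hne j (by have := Finset.mem_range.mp hj; omega))])]
      rw [← hpow]
      ring
    -- the auxiliary polynomial
    set P : Polynomial (ZMod p) :=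
      ∑ j ∈ Finset.range (L + 1), Polynomial.C (d j) *
        ∏ i ∈ (Finset.range (L + 1)).erase j,
          (Polynomial.X + Polynomial.C ((i : ℕ) : ZMod p)) with hP
    have hdeg : P.natDegree ≤ L := by
      apply Polynomial.natDegree_sum_le_of_forall_le
      intro j hj
      refine (Polynomial.natDegree_C_mul_le _ _).trans ?_
      refine (Polynomial.natDegree_prod_le _ _).trans ?_
      refine le_of_eq ?_
      rw [Finset.sum_congr rfl (fun i _ => Polynomial.natDegree_X_add_C _), Finset.sum_const,
        Finset.card_erase_of_mem hj, Finset.card_range]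
      simp
    have hevalP : ∀ x : ZMod p, P.eval x
        = ∑ j ∈ Finset.range (L + 1), d j * ∏ i ∈ (Finset.range (L + 1)).erase j, (x + (i : ℕ)) := by
      intro x
      rw [hP, Polynomial.eval_finset_sum]
      exact Finset.sum_congr rfl (fun j _ => by
        rw [Polynomial.eval_mul, Polynomial.eval_C, Polynomial.eval_prod]
        exact congrArg _ (Finset.prod_congr rfl (fun i _ => by
          rw [Polynomial.eval_add, Polynomial.eval_X, Polynomial.eval_C])))
    have heval : ∀ u : ℕ, 1 ≤ u → u ≤ L + 1 → P.eval ((u : ℕ) : ZMod p) = 0 := by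
      intro u hu1 hu2
      have hne : ∀ j : ℕ, j ≤ L → ((u : ZMod p) + (j : ZMod p)) ≠ 0 := fun j hj =>
        cast_add_ne_zero u j (by omega) (by omega)
      rw [hevalP]
      have step : ∀ j ∈ Finset.range (L + 1),
          d j * ∏ i ∈ (Finset.range (L + 1)).erase j, ((u : ZMod p) + (i : ℕ))
          = (∏ i ∈ Finset.range (L + 1), ((u : ZMod p) + (i : ℕ)))
            * (d j * ((u : ZMod p) + (j : ℕ))⁻¹) := by
        intro j hj
        have hpe := Finset.prod_erase_mul (Finset.range (L + 1))
          (fun i => (u : ZMod p) + ((i : ℕ) : ZMod p)) hj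
        have hj' : ((u : ZMod p) + (j : ℕ)) ≠ 0 := hne j (by
          have := Finset.mem_range.mp hj; omega)
        have h2 : (∏ i ∈ (Finset.range (L + 1)).erase j, ((u : ZMod p) + (i : ℕ)))
            = (∏ i ∈ Finset.range (L + 1), ((u : ZMod p) + (i : ℕ)))
              * ((u : ZMod p) + (j : ℕ))⁻¹ := (eq_mul_inv_iff_mul_eq₀ hj').mpr hpe
        rw [h2]
        ring
      rw [Finset.sum_congr rfl step, ← Finset.mul_sum, hkey u hu1 hu2, mul_zero]
    have hPzero : P = 0 := by
      apply Polynomial.eq_zero_of_natDegree_lt_card_of_eval_eq_zero P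
        (f := fun k : Fin (L + 1) => (((k : ℕ) + 1 : ℕ) : ZMod p))
      · intro k1 k2 hk
        have := cast_nat_inj (a := (k1 : ℕ) + 1) (b := (k2 : ℕ) + 1)
          (by have := k1.isLt; omega) (by have := k2.isLt; omega) hk
        exact Fin.ext (by omega)
      · intro k
        exact heval ((k : ℕ) + 1) (by omega) (by have := k.isLt; omega)
      · rw [Fintype.card_fin]
        omega
    -- contradiction: eval at -(L) is nonzero
    have hz := congrArg (Polynomial.eval (-(L : ZMod p))) hPzero
    rw [hevalP, Polynomial.eval_zero] at hz
    rw [Finset.sum_eq_single_of_mem L (Finset.self_mem_range_succ L) (fun j hj hjne => by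
      refine mul_eq_zero_of_right _ (Finset.prod_eq_zero
        (Finset.mem_erase.mpr ⟨(Ne.symm hjne), Finset.self_mem_range_succ L⟩) ?_)
      ring)] at hz
    rw [show (Finset.range (L + 1)).erase L = Finset.range L from by
      rw [Finset.range_add_one, Finset.erase_insert Finset.notMem_range_self]] at hz
    simp only [hd, if_pos rfl] at hz
    have hprodne : (∏ i ∈ Finset.range L, (-(L : ZMod p) + (i : ℕ))) ≠ 0 := by
      rw [Finset.prod_ne_zero_iff]
      intro i hi h0
      have hiL : (i : ZMod p) = (L : ZMod p) := by linear_combination h0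
      have := cast_nat_inj (a := i) (b := L)
        (by have := Finset.mem_range.mp hi; omega) (by omega) hiL
      have := Finset.mem_range.mp hi
      omega
    rw [neg_one_mul] at hz
    exact hprodne (neg_eq_zero.mp hz)
end

section
/- Let p be a prime, M an integer, s ≥ 1 an integer, and a_0, ..., a_{s-1} integers not all divisible by p. Then the rational function F(V) = Σ_{j=0}^{s-1} a_j/(V+M+j) over F_p is a nonconstant rational function, and consequently every residue class modulo p is attained by F(v) for at most O(s) values of v ∈ F_p in the domain of F. -/
/-!
Clearing denominators, `F · D = N` with `D = ∏ₖ (X + bₖ)` and `N = ∑ⱼ αⱼ ∏_{k ≠ j} (X + bₖ)`.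
At `X = -b_{j₀}` the denominator `D` vanishes, while `N` takes the value
`α_{j₀} ∏_{k ≠ j₀} (bₖ - b_{j₀}) ≠ 0` because the shifts `bₖ = M + k` are distinct mod `p` for
`k < s < p`. Hence `F ≠ c` for every constant `c`, and `N - c D` is a nonzero polynomial of
degree at most `s` whose roots contain the fiber `F⁻¹(c)`.
-/

open Polynomial Finset

namespace PartialFractionSum

variable {K ι : Type*} [Field K] [DecidableEq ι] (s : Finset ι) (α b : ι → K)

noncomputable def den : K[X] := ∏ k ∈ s, (X + C (b k))

noncomputable def num : K[X] := ∑ j ∈ s, C (α j) * ∏ k ∈ s.erase j, (X + C (b k))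

omit [DecidableEq ι] in
lemma natDegree_den_le : (den s b).natDegree ≤ #s := by
  refine (natDegree_prod_le _ _).trans ?_
  simp

lemma natDegree_num_le : (num s α b).natDegree ≤ #s := by
  refine natDegree_sum_le_of_forall_le _ _ fun j _ => ?_
  refine (natDegree_C_mul_le _ _).trans <| (natDegree_prod_le _ _).trans ?_
  simpa using card_erase_le

omit [DecidableEq ι] in
lemma eval_den_neg {j : ι} (hj : j ∈ s) : (den s b).eval (-b j) = 0 := by
  rw [den, eval_prod]
  exact prod_eq_zero hj (by simp)

variable {s b}

lemma eval_num_neg {j : ι} (hj : j ∈ s) :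
    (num s α b).eval (-b j) = α j * ∏ k ∈ s.erase j, (b k - b j) := by
  rw [num, eval_finsetSum, sum_eq_single_of_mem j hj]
  · simp [eval_prod, neg_add_eq_sub]
  · intro i hi hij
    rw [eval_mul, eval_prod, prod_eq_zero (mem_erase.2 ⟨Ne.symm hij, hj⟩) (by simp), mul_zero]

lemma eval_num_neg_ne_zero {j : ι} (hb : Set.InjOn b s) (hj : j ∈ s) (hα : α j ≠ 0) :
    (num s α b).eval (-b j) ≠ 0 := by
  rw [eval_num_neg α hj]
  refine mul_ne_zero hα <| prod_ne_zero_iff.2 fun k hk => sub_ne_zero.2 fun h => ?_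
  exact (ne_of_mem_erase hk) (hb (mem_of_mem_erase hk) hj h)

lemma eval_num_eq_sum_mul_eval_den {v : K} (hv : ∀ j ∈ s, v + b j ≠ 0) :
    (num s α b).eval v = (∑ j ∈ s, α j * (v + b j)⁻¹) * (den s b).eval v := by
  rw [num, den, eval_finsetSum, sum_mul]
  refine sum_congr rfl fun j hj => ?_
  simp only [eval_mul, eval_C, eval_prod, eval_add, eval_X]
  rw [← mul_prod_erase s _ hj, mul_assoc, inv_mul_cancel_left₀ (hv j hj)]

variable (s b)

lemma sum_div_mul_den :
    (∑ j ∈ s, RatFunc.C (α j) / (RatFunc.X + RatFunc.C (b j))) *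
      algebraMap K[X] (RatFunc K) (den s b) = algebraMap K[X] (RatFunc K) (num s α b) := by
  rw [num, den, sum_mul, map_sum]
  refine sum_congr rfl fun j hj => ?_
  have hXb : RatFunc.X + RatFunc.C (b j) ≠ 0 := by
    simpa using RatFunc.algebraMap_ne_zero (X_add_C_ne_zero (b j))
  rw [← mul_prod_erase s _ hj, map_mul, map_mul]
  simp only [map_add, RatFunc.algebraMap_X, RatFunc.algebraMap_C]
  rw [← mul_assoc, div_mul_cancel₀ _ hXb]

variable {s b}

lemma num_sub_C_mul_den_ne_zero {j : ι} (hb : Set.InjOn b s) (hj : j ∈ s) (hα : α j ≠ 0)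
    (c : K) : num s α b - C c * den s b ≠ 0 := by
  intro h
  have h' := congrArg (eval (-b j)) h
  rw [eval_sub, eval_mul, eval_den_neg s b hj, mul_zero, sub_zero, eval_zero] at h'
  exact eval_num_neg_ne_zero α hb hj hα h'

lemma sum_div_ne_C {j : ι} (hb : Set.InjOn b s) (hj : j ∈ s) (hα : α j ≠ 0) (c : K) :
    ∑ j ∈ s, RatFunc.C (α j) / (RatFunc.X + RatFunc.C (b j)) ≠ RatFunc.C c := by
  intro hc
  refine num_sub_C_mul_den_ne_zero α hb hj hα c (sub_eq_zero.2 ?_)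
  apply RatFunc.algebraMap_injective K
  rw [← sum_div_mul_den s α b, hc, map_mul, RatFunc.algebraMap_C]

lemma card_filter_sum_inv_eq_le [Fintype K] [DecidableEq K] {j : ι} (hb : Set.InjOn b s)
    (hj : j ∈ s) (hα : α j ≠ 0) (c : K) :
    #(univ.filter fun v => (∀ j ∈ s, v + b j ≠ 0) ∧ ∑ j ∈ s, α j * (v + b j)⁻¹ = c) ≤ #s := by
  set Q := num s α b - C c * den s b
  have hQ : Q ≠ 0 := num_sub_C_mul_den_ne_zero α hb hj hα c
  have hroots : univ.filter (fun v => (∀ j ∈ s, v + b j ≠ 0) ∧ ∑ j ∈ s, α j * (v + b j)⁻¹ = c)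
      ⊆ Q.roots.toFinset := by
    intro v hv
    obtain ⟨hv, hvc⟩ := (mem_filter.1 hv).2
    rw [Multiset.mem_toFinset, mem_roots hQ, IsRoot, eval_sub, eval_mul, eval_C,
      eval_num_eq_sum_mul_eval_den α hv, hvc, sub_self]
  calc _ ≤ #Q.roots.toFinset := card_le_card hroots
    _ ≤ Multiset.card Q.roots := Multiset.toFinset_card_le _
    _ ≤ Q.natDegree := card_roots' Q
    _ ≤ #s := (natDegree_sub_le _ _).trans <|
      max_le (natDegree_num_le s α b) ((natDegree_C_mul_le _ _).trans (natDegree_den_le s b))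

end PartialFractionSum

lemma ZMod.intCast_add_natCast_injOn {p s : ℕ} (hsp : s ≤ p) (M : ℤ) :
    Set.InjOn (fun j : ℕ => ((M + j : ℤ) : ZMod p)) (range s) := by
  intro j hj k hk h
  simp only [Int.cast_add, Int.cast_natCast, add_right_inj] at h
  rw [ZMod.natCast_eq_natCast_iff', Nat.mod_eq_of_lt (by simp at hj; omega),
    Nat.mod_eq_of_lt (by simp at hk; omega)] at h
  exact h

open Classical in
theorem rational_function_nonconstant_and_fibers_general (p s : ℕ) [hp : Fact p.Prime]
    (hsp : s < p) (M : ℤ) (a : ℕ → ℤ)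
    (ha : ∃ j < s, ¬ (p : ℤ) ∣ a j) :
    (∀ c : ZMod p,
      (∑ j ∈ Finset.range s,
        RatFunc.C ((a j : ℤ) : ZMod p) /
          (RatFunc.X + RatFunc.C (((M + j : ℤ)) : ZMod p))) ≠ RatFunc.C c) ∧
    ∀ c : ZMod p,
      ((Finset.univ.filter (fun v : ZMod p =>
        (∀ j ∈ Finset.range s, v + ((M + j : ℤ) : ZMod p) ≠ 0) ∧
        ∑ j ∈ Finset.range s,
          ((a j : ℤ) : ZMod p) * (v + ((M + j : ℤ) : ZMod p))⁻¹ = c)).card) ≤ 2 * s := by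
  obtain ⟨j, hj, hpj⟩ := ha
  have hb := ZMod.intCast_add_natCast_injOn hsp.le M
  have hj' : j ∈ range s := mem_range.2 hj
  have hα : ((a j : ℤ) : ZMod p) ≠ 0 := by rwa [Ne, ZMod.intCast_zmod_eq_zero_iff_dvd]
  refine ⟨PartialFractionSum.sum_div_ne_C _ hb hj' hα, fun c => ?_⟩
  calc _ ≤ #(range s) := PartialFractionSum.card_filter_sum_inv_eq_le _ hb hj' hα c
    _ ≤ 2 * s := by rw [card_range]; omega

open Classical in
theorem rational_function_nonconstant_and_fibers (p s : ℕ) [hp : Fact p.Prime]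
    (hs1 : 1 ≤ s) (hsp : s < p) (M : ℤ) (a : ℕ → ℤ)
    (ha : ∃ j < s, ¬ (p : ℤ) ∣ a j) :
    (∀ c : ZMod p,
      (∑ j ∈ Finset.range s,
        RatFunc.C ((a j : ℤ) : ZMod p) /
          (RatFunc.X + RatFunc.C (((M + j : ℤ)) : ZMod p))) ≠ RatFunc.C c) ∧
    ∀ c : ZMod p,
      ((Finset.univ.filter (fun v : ZMod p =>
        (∀ j ∈ Finset.range s, v + ((M + j : ℤ) : ZMod p) ≠ 0) ∧
        ∑ j ∈ Finset.range s,
          ((a j : ℤ) : ZMod p) * (v + ((M + j : ℤ) : ZMod p))⁻¹ = c)).card) ≤ 2 * s :=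
  rational_function_nonconstant_and_fibers_general p s (hp := hp) hsp M a ha
end

section
/- Let p be a prime, s ≥ 1 with s < p, M an integer, and a_0, ..., a_{s-1} integers with gcd(a_0,...,a_{s-1},p) = 1. For N with 1 ≤ N < p^2, the exponential sum S = Σ_{u=M+1}^{M+N} e_p(Σ_{j=0}^{s-1} a_j·q_p(u+j)) satisfies |S| ≤ C·s·p·log p for an absolute constant C, where e_p(z) = exp(2πiz/p). -/
/-!
Split `u = v + k p` with `0 ≤ v < p`. Modulo `p`, `q_p(w + k p) ≡ q_p(w) - k w⁻¹`, so for fixed `v`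
the phase is affine in `k` with slope `-R(M + 1 + v)`, where `R(x) = Σ_j a_j (x + j)⁻¹`, and the
sum over `k` is a geometric sum of length at most `p`, bounded by `p` at slope `0` and by
`p / (2‖r‖)` at slope `r ≠ 0`. As `v` runs over a full residue system, `R` takes each value at
most `2 s` times: away from its `s` poles, `R(x) = c` is a polynomial equation of degree `≤ s`
that is not identically satisfied, because `R` has a genuine pole at some `-j` with `a_j ≢ 0`.
Summing the geometric bound over all residues `r` costs `p (2 + log p)`.
-/

open Finset

lemma fermatQuotient_mul_modEq {p : ℕ} (hp : p.Prime) {u : ℤ} (hu : ¬ (p : ℤ) ∣ u) :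
    p * fermatQuotient p u ≡ u ^ (p - 1) - 1 [ZMOD p * p] := by
  have hcop : IsCoprime u p :=
    ((Nat.prime_iff_prime_int.mp hp).irreducible.coprime_iff_not_dvd.mpr hu).symm
  obtain ⟨x, hx⟩ := Int.prime_dvd_pow_sub_one hp hcop
  rw [fermatQuotient, if_neg hu, hx, Int.mul_ediv_cancel_left _ (by exact_mod_cast hp.ne_zero)]
  exact (Int.mod_modEq x p).mul_left'

lemma fermatQuotient_add_mul_self_modEq {p : ℕ} (hp : p.Prime) {v : ℤ} (hv : ¬ (p : ℤ) ∣ v)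
    (k : ℤ) :
    fermatQuotient p (v + k * p) ≡ fermatQuotient p v + v ^ (p - 1 - 1) * k * (p - 1 : ℕ)
      [ZMOD p] := by
  have hv' : ¬ (p : ℤ) ∣ v + k * p := fun h => hv (by simpa using h.sub (dvd_mul_left (p : ℤ) k))
  set X := v ^ (p - 1 - 1) * (k * p) * (p - 1 : ℕ)
  have hbinom : X + v ^ (p - 1) ≡ (v + k * p) ^ (p - 1) [ZMOD p * p] := by
    rw [Int.modEq_iff_dvd, ← sub_sub]
    exact (show (p * p : ℤ) ∣ (k * p) ^ 2 from ⟨k ^ 2, by ring⟩).trans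
      (sq_dvd_add_pow_sub_sub (k * p) v (p - 1))
  refine Int.ModEq.mul_left_cancel' (c := p) (by exact_mod_cast hp.ne_zero) ?_
  calc p * fermatQuotient p (v + k * p) ≡ (v + k * p) ^ (p - 1) - 1 [ZMOD p * p] :=
        fermatQuotient_mul_modEq hp hv'
    _ ≡ X + (v ^ (p - 1) - 1) [ZMOD p * p] := by
        rw [← add_sub_assoc]; exact hbinom.symm.sub_right 1
    _ ≡ X + p * fermatQuotient p v [ZMOD p * p] := (fermatQuotient_mul_modEq hp hv).symm.add_left X
    _ = _ := by ring

lemma fermatQuotient_add_mul_self {p : ℕ} (hp : p.Prime) (v k : ℤ) :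
    (fermatQuotient p (v + k * p) : ZMod p) = fermatQuotient p v - k * (v : ZMod p)⁻¹ := by
  have : Fact p.Prime := ⟨hp⟩
  by_cases hv : (p : ℤ) ∣ v
  · have hv' : (p : ℤ) ∣ v + k * p := hv.add (dvd_mul_left _ _)
    simp [fermatQuotient, hv, hv', (ZMod.intCast_zmod_eq_zero_iff_dvd v p).mpr hv]
  have hinv : (v : ZMod p) ^ (p - 1 - 1) = (v : ZMod p)⁻¹ := by
    refine eq_inv_of_mul_eq_one_left ?_
    rw [← pow_succ, Nat.sub_add_cancel (Nat.le_sub_of_add_le hp.two_le)]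
    exact ZMod.pow_card_sub_one_eq_one (by rwa [Ne, ZMod.intCast_zmod_eq_zero_iff_dvd])
  rw [(ZMod.intCast_eq_intCast_iff _ _ _).mpr (fermatQuotient_add_mul_self_modEq hp hv k)]
  push_cast [Nat.cast_sub hp.one_le, hinv, ZMod.natCast_self]
  ring

def fermatQuotientSum (p : ℕ) (a : ℕ → ℤ) (s : ℕ) (w : ℤ) : ℤ :=
  ∑ j ∈ range s, a j * fermatQuotient p (w + j)

def reciprocalSum (p : ℕ) (a : ℕ → ℤ) (s : ℕ) (x : ZMod p) : ZMod p :=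
  ∑ j ∈ range s, (a j : ZMod p) * (x + j)⁻¹

lemma fermatQuotientSum_add_mul_self {p : ℕ} (hp : p.Prime) (a : ℕ → ℤ) (s : ℕ) (w k : ℤ) :
    (fermatQuotientSum p a s (w + k * p) : ZMod p) =
      fermatQuotientSum p a s w - k * reciprocalSum p a s w := by
  simp only [fermatQuotientSum, reciprocalSum, Int.cast_sum, Int.cast_mul, mul_sum,
    ← sum_sub_distrib]
  refine sum_congr rfl fun j _ => ?_
  rw [add_right_comm, fermatQuotient_add_mul_self hp]
  push_cast
  ring

open Polynomial Lagrange in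
lemma card_filter_sum_mul_inv_sub_eq_le {F ι : Type*} [Field F] [Fintype F] [DecidableEq F]
    [DecidableEq ι] {s : Finset ι} {v : ι → F} (hvs : Set.InjOn v s) {a : ι → F}
    (ha : ∃ i ∈ s, a i ≠ 0) (c : F) :
    #{x | ∑ i ∈ s, a i * (x - v i)⁻¹ = c} ≤ 2 * #s := by
  obtain ⟨i₀, hi₀, hai₀⟩ := ha
  -- Off the nodes, `Q(x) = nodal(x) * (Σ a_i / (x - v_i) - c)` (barycentric form of `interpolate`).
  set Q : F[X] := interpolate s v (fun i => a i * (nodalWeight s v i)⁻¹) - C c * nodal s v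
  have hQ : Q ≠ 0 := by
    intro h
    have := congrArg (eval (v i₀)) h
    rw [eval_sub, eval_interpolate_at_node _ hvs hi₀, eval_mul, eval_nodal_at_node hi₀, mul_zero,
      sub_zero, eval_zero] at this
    exact mul_ne_zero hai₀ (inv_ne_zero (nodalWeight_ne_zero hvs hi₀)) this
  have hdeg : Q.natDegree ≤ #s :=
    natDegree_sub_le_of_le (natDegree_le_of_degree_le (degree_interpolate_lt _ hvs).le)
      ((natDegree_C_mul_le _ _).trans natDegree_nodal.le) |>.trans_eq (max_self _)
  have hsub : ({x | ∑ i ∈ s, a i * (x - v i)⁻¹ = c} : Finset F) ⊆ s.image v ∪ Q.roots.toFinset := by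
    intro x hx
    by_cases hxv : ∀ i ∈ s, x ≠ v i
    · refine mem_union_right _ ?_
      rw [Multiset.mem_toFinset, mem_roots hQ, IsRoot, eval_sub, eval_interpolate_not_at_node _ hxv,
        eval_mul, eval_C, ← (mem_filter.mp hx).2, sub_eq_zero, mul_comm]
      congr 1
      refine sum_congr rfl fun i hi => ?_
      have := nodalWeight_ne_zero hvs hi
      field_simp
    · push Not at hxv
      obtain ⟨i, hi, rfl⟩ := hxv
      exact mem_union_left _ (mem_image_of_mem v hi)
  calc #{x | ∑ i ∈ s, a i * (x - v i)⁻¹ = c}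
      ≤ #(s.image v ∪ Q.roots.toFinset) := card_le_card hsub
    _ ≤ #(s.image v) + #Q.roots.toFinset := card_union_le _ _
    _ ≤ #s + #s := add_le_add card_image_le
        ((Multiset.toFinset_card_le _).trans ((card_roots' Q).trans hdeg))
    _ = 2 * #s := by ring

lemma card_filter_reciprocalSum_eq_le {p s : ℕ} [Fact p.Prime] (hsp : s ≤ p) {a : ℕ → ℤ}
    (ha : ∃ j < s, ¬ (p : ℤ) ∣ a j) (c : ZMod p) :
    #{x | reciprocalSum p a s x = c} ≤ 2 * s := by
  have hinj : Set.InjOn (fun j : ℕ => -(j : ZMod p)) (range s) := by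
    intro i hi j hj h
    rw [← ZMod.val_natCast_of_lt ((mem_range.mp hi).trans_le hsp),
      ← ZMod.val_natCast_of_lt ((mem_range.mp hj).trans_le hsp), neg_inj.mp h]
  obtain ⟨j, hj, haj⟩ := ha
  unfold reciprocalSum
  simpa [sub_neg_eq_add] using
    card_filter_sum_mul_inv_sub_eq_le hinj (a := fun j => (a j : ZMod p))
      ⟨j, mem_range.mpr hj, by rwa [Ne, ZMod.intCast_zmod_eq_zero_iff_dvd]⟩ c

lemma norm_geom_sum_le {𝕜 : Type*} [NormedDivisionRing 𝕜] {z : 𝕜} (hz : ‖z‖ = 1) (hz1 : z ≠ 1)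
    (K : ℕ) : ‖∑ k ∈ range K, z ^ k‖ ≤ 2 / ‖z - 1‖ := by
  rw [geom_sum_eq hz1, norm_div]
  gcongr
  calc ‖z ^ K - 1‖ ≤ ‖z ^ K‖ + ‖(1 : 𝕜)‖ := norm_sub_le _ _
    _ = 2 := by rw [norm_pow, hz, one_pow, norm_one]; norm_num

lemma ZMod.norm_stdAddChar (p : ℕ) [NeZero p] (t : ZMod p) : ‖ZMod.stdAddChar t‖ = 1 := by
  rw [ZMod.stdAddChar_apply, Circle.norm_coe]

open Complex in
lemma four_mul_abs_valMinAbs_div_le_norm_stdAddChar_sub_one {p : ℕ} [NeZero p] (t : ZMod p) :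
    4 * |(t.valMinAbs : ℝ)| / p ≤ ‖ZMod.stdAddChar t - 1‖ := by
  set m := t.valMinAbs
  have hpR : (0 : ℝ) < p := Nat.cast_pos.mpr (NeZero.pos p)
  have hm : 2 * |(m : ℝ)| ≤ p := by
    have := ZMod.natAbs_valMinAbs_le t
    rw [← Int.cast_abs, Int.abs_eq_natAbs]
    exact_mod_cast (by omega : 2 * m.natAbs ≤ p)
  have hsin : 2 / Real.pi * |Real.pi * m / p| ≤ |Real.sin (Real.pi * m / p)| := by
    refine Real.mul_abs_le_abs_sin ?_
    rw [abs_div, abs_mul, abs_of_pos Real.pi_pos, abs_of_pos hpR, div_le_iff₀ hpR]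
    nlinarith [Real.pi_pos]
  rw [← ZMod.coe_valMinAbs t, ZMod.stdAddChar_coe,
    show 2 * Real.pi * I * (m : ℂ) / p = I * ((2 * Real.pi * m / p : ℝ) : ℂ) by push_cast; ring,
    norm_exp_I_mul_ofReal_sub_one, norm_mul, Real.norm_eq_abs, Real.norm_eq_abs,
    show 2 * Real.pi * m / p / 2 = Real.pi * m / p by ring]
  rw [abs_div, abs_mul, abs_of_pos Real.pi_pos, abs_of_pos hpR] at hsin
  calc 4 * |(m : ℝ)| / p = 2 * (2 / Real.pi * (Real.pi * |(m : ℝ)| / p)) := by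
        field_simp; ring
    _ ≤ |2| * |Real.sin (Real.pi * m / p)| := by rw [abs_two]; gcongr

-- `|t.valMinAbs|` is the distance `‖t‖` from `t` to the nearest multiple of `p`.
noncomputable def geomSumBound (p : ℕ) (t : ZMod p) : ℝ :=
  if t = 0 then p else p / (2 * |(t.valMinAbs : ℝ)|)

lemma geomSumBound_nonneg (p : ℕ) (t : ZMod p) : 0 ≤ geomSumBound p t := by
  unfold geomSumBound
  split_ifs <;> positivity

lemma geomSumBound_neg (p : ℕ) (t : ZMod p) : geomSumBound p (-t) = geomSumBound p t := by
  simp only [geomSumBound, neg_eq_zero, ← Int.cast_abs, Int.abs_eq_natAbs,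
    ZMod.natAbs_valMinAbs_neg]

lemma norm_sum_stdAddChar_nsmul_le {p K : ℕ} [NeZero p] (hK : K ≤ p) (t : ZMod p) :
    ‖∑ k ∈ range K, ZMod.stdAddChar (k • t)‖ ≤ geomSumBound p t := by
  simp_rw [AddChar.map_nsmul_eq_pow]
  unfold geomSumBound
  split_ifs with ht
  · simpa [ht] using hK
  have hm : 0 < |(t.valMinAbs : ℝ)| := by
    rw [abs_pos, Int.cast_ne_zero, Ne, ZMod.valMinAbs_eq_zero]
    exact ht
  have hpR : (0 : ℝ) < p := Nat.cast_pos.mpr (NeZero.pos p)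
  have hlb := four_mul_abs_valMinAbs_div_le_norm_stdAddChar_sub_one t
  have hne : ZMod.stdAddChar t ≠ 1 := by
    rintro h
    rw [h, sub_self, norm_zero] at hlb
    have : 0 < 4 * |(t.valMinAbs : ℝ)| / p := by positivity
    linarith
  calc _ ≤ 2 / ‖ZMod.stdAddChar t - 1‖ := norm_geom_sum_le (ZMod.norm_stdAddChar p t) hne K
    _ ≤ 2 / (4 * |(t.valMinAbs : ℝ)| / p) := by gcongr
    _ = p / (2 * |(t.valMinAbs : ℝ)|) := by field_simp; ring

lemma ZMod.sum_range_natCast {M : Type*} [AddCommMonoid M] (p : ℕ) [NeZero p] (g : ZMod p → M) :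
    ∑ v ∈ range p, g v = ∑ x, g x := by
  obtain ⟨n, rfl⟩ := Nat.exists_eq_succ_of_ne_zero (NeZero.ne p)
  exact (Fin.sum_univ_eq_sum_range (fun v => g v) _).symm.trans
    (Fintype.sum_congr _ _ fun x => congrArg g (Fin.cast_val_eq_self x))

lemma ZMod.sum_inv_val_eq_harmonic (p : ℕ) [NeZero p] :
    ∑ t : ZMod p, ((t.val : ℝ))⁻¹ = harmonic (p - 1) := by
  rw [← ZMod.sum_range_natCast,
    sum_congr rfl fun T hT => by rw [ZMod.val_natCast_of_lt (mem_range.mp hT)]]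
  obtain ⟨n, rfl⟩ := Nat.exists_eq_succ_of_ne_zero (NeZero.ne p)
  simp [sum_range_succ', harmonic]

lemma ZMod.abs_valMinAbs_eq_min {p : ℕ} [NeZero p] {t : ZMod p} (ht : t ≠ 0) :
    |(t.valMinAbs : ℝ)| = min (t.val : ℝ) ((-t).val : ℝ) := by
  rw [← Int.cast_abs, Int.abs_eq_natAbs, Int.cast_natCast, ZMod.valMinAbs_natAbs_eq_min,
    ZMod.neg_val, if_neg ht, Nat.cast_min]

lemma geomSumBound_le {p : ℕ} [NeZero p] (t : ZMod p) :
    geomSumBound p t ≤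
      (if t = 0 then (p : ℝ) else 0) + p / 2 * ((t.val : ℝ)⁻¹ + ((-t).val : ℝ)⁻¹) := by
  unfold geomSumBound
  split_ifs with ht
  · simp [ht]
  have ha : (0 : ℝ) < t.val := by exact_mod_cast ZMod.val_pos.mpr ht
  have hb : (0 : ℝ) < (-t).val := by exact_mod_cast ZMod.val_pos.mpr (neg_ne_zero.mpr ht)
  rw [zero_add, ZMod.abs_valMinAbs_eq_min ht]
  calc (p : ℝ) / (2 * min (t.val : ℝ) ((-t).val : ℝ)) = p / 2 * (min (t.val : ℝ) ((-t).val))⁻¹ := by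
        ring
    _ ≤ _ := by
        gcongr
        rcases min_choice (t.val : ℝ) ((-t).val : ℝ) with h | h <;> rw [h] <;>
          linarith [inv_pos.2 ha, inv_pos.2 hb]

lemma sum_geomSumBound_le (p : ℕ) [NeZero p] :
    ∑ t : ZMod p, geomSumBound p t ≤ p * (2 + Real.log p) := by
  have hneg : ∑ t : ZMod p, ((-t).val : ℝ)⁻¹ = ∑ t : ZMod p, (t.val : ℝ)⁻¹ :=
    Equiv.sum_comp (Equiv.neg (ZMod p)) fun t => ((t.val : ℝ))⁻¹
  have hlog : Real.log (p - 1 : ℕ) ≤ Real.log p := by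
    rcases Nat.eq_zero_or_pos (p - 1) with h | h
    · rw [h, Nat.cast_zero, Real.log_zero]; exact Real.log_natCast_nonneg p
    · exact Real.log_le_log (by exact_mod_cast h) (by exact_mod_cast Nat.sub_le p 1)
  calc ∑ t : ZMod p, geomSumBound p t
      ≤ ∑ t : ZMod p, ((if t = 0 then (p : ℝ) else 0) +
          p / 2 * ((t.val : ℝ)⁻¹ + ((-t).val : ℝ)⁻¹)) :=
        sum_le_sum fun t _ => geomSumBound_le t
    _ = p + p * harmonic (p - 1) := by
        rw [sum_add_distrib, ← mul_sum, sum_add_distrib, sum_ite_eq' univ (0 : ZMod p),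
          if_pos (mem_univ _), hneg, ZMod.sum_inv_val_eq_harmonic]
        ring
    _ ≤ p * (2 + Real.log p) := by
        have := harmonic_le_one_add_log (p - 1)
        have : (0 : ℝ) ≤ p := Nat.cast_nonneg p
        nlinarith

lemma Nat.add_mul_lt_iff_lt_div {p N v k : ℕ} (hp : 0 < p) (hv : v < p) :
    v + k * p < N ↔ k < (N + p - 1 - v) / p := by
  rw [Nat.lt_iff_add_one_le (m := k), Nat.le_div_iff_mul_le hp, add_mul, one_mul]
  omega

lemma Finset.sum_range_eq_sum_range_sum_range_add_mul {M : Type*} [AddCommMonoid M] {p : ℕ}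
    (hp : 0 < p) (N : ℕ) (g : ℕ → M) :
    ∑ u ∈ range N, g u = ∑ v ∈ range p, ∑ k ∈ range ((N + p - 1 - v) / p), g (v + k * p) := by
  rw [sum_sigma']
  refine sum_bij' (fun u _ => ⟨u % p, u / p⟩) (fun x _ => x.1 + x.2 * p) ?_ ?_ ?_ ?_ ?_
  · intro u hu
    simp only [mem_sigma, mem_range] at hu ⊢
    rw [← Nat.add_mul_lt_iff_lt_div hp (Nat.mod_lt _ hp), Nat.mod_add_div']
    exact ⟨Nat.mod_lt _ hp, hu⟩
  · rintro ⟨v, k⟩ h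
    simp only [mem_sigma, mem_range] at h ⊢
    exact (Nat.add_mul_lt_iff_lt_div hp h.1).mpr h.2
  · intro u _
    exact Nat.mod_add_div' u p
  · rintro ⟨v, k⟩ h
    simp only [mem_sigma, mem_range] at h
    simp [Nat.add_mul_mod_self_right, Nat.mod_eq_of_lt h.1, Nat.add_mul_div_right _ _ hp,
      Nat.div_eq_of_lt h.1]
  · intro u _
    rw [Nat.mod_add_div']

lemma norm_sum_stdAddChar_fermatQuotientSum_le {p N : ℕ} [Fact p.Prime] (hN : N ≤ p ^ 2)
    (a : ℕ → ℤ) (s : ℕ) (w : ℤ) :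
    ‖∑ u ∈ range N, ZMod.stdAddChar (fermatQuotientSum p a s (w + u) : ZMod p)‖ ≤
      ∑ x, geomSumBound p (reciprocalSum p a s x) := by
  have hp : p.Prime := Fact.out
  set e : AddChar (ZMod p) ℂ := ZMod.stdAddChar
  have hshift : ∀ v k : ℕ, e (fermatQuotientSum p a s (w + ↑(v + k * p))) =
      e (fermatQuotientSum p a s (w + v)) * e (k • -reciprocalSum p a s (w + v)) := by
    intro v k
    rw [← AddChar.map_add_eq_mul, smul_neg, ← sub_eq_add_neg, nsmul_eq_mul,
      show w + ((v + k * p : ℕ) : ℤ) = w + v + k * p by push_cast; ring,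
      fermatQuotientSum_add_mul_self hp]
    push_cast
    rfl
  have hlen : ∀ v < p, (N + p - 1 - v) / p ≤ p := fun v hv => by
    by_contra! h
    have := (Nat.add_mul_lt_iff_lt_div hp.pos hv).mpr h
    nlinarith
  calc _ = ‖∑ v ∈ range p, ∑ k ∈ range ((N + p - 1 - v) / p),
        e (fermatQuotientSum p a s (w + v)) * e (k • -reciprocalSum p a s (w + v))‖ := by
        simp_rw [sum_range_eq_sum_range_sum_range_add_mul hp.pos N, hshift]
    _ ≤ ∑ v ∈ range p, geomSumBound p (reciprocalSum p a s (w + v)) := by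
        refine (norm_sum_le _ _).trans (sum_le_sum fun v hv => ?_)
        rw [← mul_sum, norm_mul, ZMod.norm_stdAddChar, one_mul, ← geomSumBound_neg]
        exact norm_sum_stdAddChar_nsmul_le (hlen v (mem_range.mp hv)) _
    _ = ∑ x, geomSumBound p (reciprocalSum p a s x) := by
        rw [ZMod.sum_range_natCast p fun y => geomSumBound p (reciprocalSum p a s (w + y))]
        exact Equiv.sum_comp (Equiv.addLeft _) fun x => geomSumBound p (reciprocalSum p a s x)

lemma sum_comp_le_mul_sum {α β : Type*} [Fintype α] [Fintype β] [DecidableEq β] (φ : α → β)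
    {g : β → ℝ} (hg : ∀ b, 0 ≤ g b) {m : ℕ} (hφ : ∀ b, #{x | φ x = b} ≤ m) :
    ∑ x, g (φ x) ≤ m * ∑ b, g b := by
  rw [← sum_fiberwise' univ φ g, mul_sum]
  refine sum_le_sum fun b _ => ?_
  rw [sum_const, nsmul_eq_mul]
  exact mul_le_mul_of_nonneg_right (by exact_mod_cast hφ b) (hg b)

lemma exp_two_pi_I_mul_sum_fermatQuotient_div {p : ℕ} [NeZero p] (a : ℕ → ℤ) (s : ℕ) (w : ℤ) :
    Complex.exp (2 * Real.pi * Complex.I *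
      ((∑ j ∈ range s, (a j : ℂ) * (fermatQuotient p (w + j) : ℂ)) / p)) =
        ZMod.stdAddChar (fermatQuotientSum p a s w : ZMod p) := by
  rw [ZMod.stdAddChar_coe, mul_div_assoc, fermatQuotientSum]
  push_cast
  rfl

open Complex in
theorem exp_sum_fermatQuotient_bound :
    ∃ C : ℝ, 0 < C ∧ ∀ (p s N : ℕ) (M : ℤ) (a : ℕ → ℤ),
      p.Prime → 1 ≤ s → s < p → (∃ j < s, ¬ (p : ℤ) ∣ a j) → 1 ≤ N → N < p ^ 2 →
      ‖∑ u ∈ Finset.range N,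
          Complex.exp (2 * Real.pi * Complex.I *
            ((∑ j ∈ Finset.range s,
              (a j : ℂ) * (fermatQuotient p (M + 1 + u + j) : ℂ)) / (p : ℂ)))‖ ≤
        C * s * p * Real.log p := by
  refine ⟨8, by norm_num, fun p s N M a hp _ hsp ha _ hNp => ?_⟩
  have : Fact p.Prime := ⟨hp⟩
  have hfiber : ∀ t, #{x : ZMod p | reciprocalSum p a s x = t} ≤ 2 * s :=
    card_filter_reciprocalSum_eq_le hsp.le ha
  have hlog : (2 : ℝ) / 3 ≤ Real.log p :=
    calc (2 : ℝ) / 3 ≤ Real.log 2 := by linarith [Real.log_two_gt_d9]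
      _ ≤ Real.log p := Real.log_le_log two_pos (by exact_mod_cast hp.two_le)
  simp_rw [exp_two_pi_I_mul_sum_fermatQuotient_div]
  calc _ ≤ ∑ x, geomSumBound p (reciprocalSum p a s x) :=
        norm_sum_stdAddChar_fermatQuotientSum_le hNp.le a s (M + 1)
    _ ≤ (2 * s : ℕ) * ∑ t, geomSumBound p t :=
        sum_comp_le_mul_sum _ (geomSumBound_nonneg p) hfiber
    _ ≤ 2 * s * (p * (2 + Real.log p)) := by
        push_cast
        gcongr
        exact sum_geomSumBound_le p
    _ ≤ 8 * s * p * Real.log p := by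
        have : (0 : ℝ) ≤ s * p := by positivity
        nlinarith
end

section
/- Let p be a prime, u an integer with 1 ≤ u ≤ p-1, and let v, w, s, k be integers with gcd(vw, p) = 1, u ≡ v·w^{-1} (mod p), s ≡ v·w^{-1} (mod p^2), 0 ≤ s < p^2, and k = (s − u)/p. Then q_p(u) ≡ q_p(v) − q_p(w) + k·v^{-1}·w (mod p), where v^{-1} is the inverse of v modulo p. -/
/-- Truncated binomial expansion modulo `b ^ 2`. -/
lemma add_pow_modEq_aux (a b : ℤ) (n : ℕ) :
    (a + b) ^ n ≡ a ^ n + n * a ^ (n - 1) * b [ZMOD b ^ 2] := by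
  induction n with
  | zero => simp
  | succ n ih =>
    cases n with
    | zero => simpa using Int.ModEq.refl (a + b)
    | succ m =>
      calc (a + b) ^ (m + 2) = (a + b) ^ (m + 1) * (a + b) := by ring
        _ ≡ (a ^ (m + 1) + (m + 1) * a ^ m * b) * (a + b) [ZMOD b ^ 2] := by
            simpa using ih.mul_right (a + b)
        _ ≡ a ^ (m + 2) + (m + 2) * a ^ (m + 1) * b [ZMOD b ^ 2] := by
            have h2 : a ^ (m + 2) + ((m : ℤ) + 2) * a ^ (m + 1) * b +
                  (((m : ℤ) + 1) * a ^ m) * b ^ 2 ≡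
                a ^ (m + 2) + ((m : ℤ) + 2) * a ^ (m + 1) * b [ZMOD b ^ 2] :=
              (Int.modEq_iff_dvd.mpr ⟨-(((m : ℤ) + 1) * a ^ m), by ring⟩)
            calc (a ^ (m + 1) + (↑(m + 1) : ℤ) * a ^ m * b) * (a + b)
                = a ^ (m + 2) + ((m : ℤ) + 2) * a ^ (m + 1) * b +
                  (((m : ℤ) + 1) * a ^ m) * b ^ 2 := by push_cast; ring
              _ ≡ a ^ (m + 2) + ((m : ℤ) + 2) * a ^ (m + 1) * b [ZMOD b ^ 2] := h2
              _ = a ^ (m + 2) + (↑(m + 2) : ℤ) * a ^ (m + 2 - 1) * b := by push_cast; ring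

theorem fermatQuotient_via_small_fraction (p : ℕ) (hp : p.Prime)
    (u v w s k : ℤ) (hu1 : 1 ≤ u) (hup : u ≤ (p : ℤ) - 1)
    (hvw : Int.gcd (v * w) p = 1)
    (huvw : w * u ≡ v [ZMOD (p : ℤ)])
    (hs : w * s ≡ v [ZMOD ((p : ℤ) ^ 2)]) (hs0 : 0 ≤ s) (hsp : s < (p : ℤ) ^ 2)
    (hk : s - u = k * p)
    (v' : ℤ) (hv' : v * v' ≡ 1 [ZMOD (p : ℤ)]) :
    fermatQuotient p u ≡
      fermatQuotient p v - fermatQuotient p w + k * v' * w [ZMOD (p : ℤ)] := by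
  have hp2 : 2 ≤ p := hp.two_le
  have hpZ : Prime (p : ℤ) := Nat.prime_iff_prime_int.mp hp
  have hpne : (p : ℤ) ≠ 0 := by exact_mod_cast hp.ne_zero
  -- coprimality
  have hcop_vw : IsCoprime (v * w) (p : ℤ) := Int.isCoprime_iff_gcd_eq_one.mpr hvw
  have hcop_v : IsCoprime v (p : ℤ) := IsCoprime.of_mul_left_left hcop_vw
  have hcop_w : IsCoprime w (p : ℤ) := IsCoprime.of_mul_left_right hcop_vw
  have hndvd_u : ¬ (p : ℤ) ∣ u := by
    intro h
    have := Int.le_of_dvd (by omega) h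
    omega
  have hcop_u : IsCoprime u (p : ℤ) := (hpZ.coprime_iff_not_dvd.mpr hndvd_u).symm
  have hndvd_v : ¬ (p : ℤ) ∣ v := fun h => hpZ.not_unit (hcop_v.isUnit_of_dvd' h dvd_rfl)
  have hndvd_w : ¬ (p : ℤ) ∣ w := fun h => hpZ.not_unit (hcop_w.isUnit_of_dvd' h dvd_rfl)
  -- Fermat little theorem witnesses: x ^ (p-1) = 1 + p * A
  obtain ⟨Au, hAu⟩ : (p : ℤ) ∣ u ^ (p - 1) - 1 :=
    dvd_sub_comm.mp (Int.ModEq.pow_card_sub_one_eq_one hp hcop_u).dvd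
  obtain ⟨Av, hAv⟩ : (p : ℤ) ∣ v ^ (p - 1) - 1 :=
    dvd_sub_comm.mp (Int.ModEq.pow_card_sub_one_eq_one hp hcop_v).dvd
  obtain ⟨Aw, hAw⟩ : (p : ℤ) ∣ w ^ (p - 1) - 1 :=
    dvd_sub_comm.mp (Int.ModEq.pow_card_sub_one_eq_one hp hcop_w).dvd
  -- fermatQuotient values
  have hq : ∀ x A : ℤ, ¬ (p : ℤ) ∣ x → x ^ (p - 1) - 1 = (p : ℤ) * A →
      fermatQuotient p x ≡ A [ZMOD (p : ℤ)] := by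
    intro x A hx hA
    unfold fermatQuotient
    rw [if_neg hx, hA, Int.mul_ediv_cancel_left _ hpne]
    exact Int.emod_emod_of_dvd A dvd_rfl
  have hqu := hq u Au hndvd_u hAu
  have hqv := hq v Av hndvd_v hAv
  have hqw := hq w Aw hndvd_w hAw
  -- main congruence mod p^2
  have hsu : s = u + k * (p : ℤ) := by linarith
  have hbin : s ^ (p - 1) ≡ u ^ (p - 1) + ((p : ℤ) - 1) * u ^ (p - 2) * (k * (p : ℤ))
      [ZMOD (p : ℤ) ^ 2] := by
    have h := (add_pow_modEq_aux u (k * (p : ℤ)) (p - 1)).of_dvd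
      (⟨k ^ 2, by ring⟩ : ((p : ℤ) ^ 2) ∣ (k * (p : ℤ)) ^ 2)
    rw [← hsu] at h
    have hc : ((p - 1 : ℕ) : ℤ) = (p : ℤ) - 1 := by
      have h1 : (1 : ℕ) ≤ p := by omega
      push_cast [h1]; ring
    have he : p - 1 - 1 = p - 2 := by omega
    rwa [hc, he] at h
  have hmain : v ^ (p - 1) ≡
      w ^ (p - 1) * (u ^ (p - 1) + ((p : ℤ) - 1) * u ^ (p - 2) * (k * (p : ℤ)))
      [ZMOD (p : ℤ) ^ 2] := by
    calc v ^ (p - 1) ≡ (w * s) ^ (p - 1) [ZMOD (p : ℤ) ^ 2] := (hs.pow _).symm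
      _ = w ^ (p - 1) * s ^ (p - 1) := mul_pow w s _
      _ ≡ _ [ZMOD (p : ℤ) ^ 2] := hbin.mul_left _
  -- extract mod-p relation on the A's
  have hEu : u ^ (p - 1) = 1 + (p : ℤ) * Au := by linarith
  have hEv : v ^ (p - 1) = 1 + (p : ℤ) * Av := by linarith
  have hEw : w ^ (p - 1) = 1 + (p : ℤ) * Aw := by linarith
  rw [hEu, hEv, hEw] at hmain
  obtain ⟨c, hc⟩ := hmain.dvd
  set U : ℤ := u ^ (p - 2) with hUdef
  have hdvdE : (p : ℤ) ∣ Au + Aw + ((p : ℤ) - 1) * U * k - Av := by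
    refine ⟨c - (Aw * Au + Aw * ((p : ℤ) - 1) * U * k), ?_⟩
    have hcancel : (p : ℤ) * (Au + Aw + ((p : ℤ) - 1) * U * k - Av) =
        (p : ℤ) * ((p : ℤ) * (c - (Aw * Au + Aw * ((p : ℤ) - 1) * U * k))) := by
      linear_combination hc
    exact mul_left_cancel₀ hpne hcancel
  -- pass to ZMod p for the final algebra
  have hfin : Au ≡ Av - Aw + k * v' * w [ZMOD (p : ℤ)] := by
    rw [← ZMod.intCast_eq_intCast_iff] at huvw hv' ⊢
    push_cast at huvw hv' ⊢
    have hp0 : ((p : ℕ) : ZMod p) = 0 := ZMod.natCast_self p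
    have hA0 : (Au : ZMod p) + Aw + (((p : ℕ) : ZMod p) - 1) * (u : ZMod p) ^ (p - 2) * k
        - Av = 0 := by
      have := (ZMod.intCast_zmod_eq_zero_iff_dvd _ p).mpr hdvdE
      push_cast [hUdef] at this
      linear_combination this
    have hu1' : (u : ZMod p) ^ (p - 1) = 1 := by
      have : ((u ^ (p - 1) : ℤ) : ZMod p) = ((1 + (p : ℤ) * Au : ℤ) : ZMod p) := by
        rw [hEu]
      push_cast at this
      rw [this, hp0]; ring
    have hU' : (u : ZMod p) ^ (p - 2) = (v' : ZMod p) * w := by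
      have h1 : (u : ZMod p) ^ (p - 2) * u = (u : ZMod p) ^ (p - 1) := by
        rw [← pow_succ]
        congr 1
        omega
      calc (u : ZMod p) ^ (p - 2)
          = (u : ZMod p) ^ (p - 2) * ((v : ZMod p) * v') := by rw [hv', mul_one]
        _ = (u : ZMod p) ^ (p - 2) * (((w : ZMod p) * u) * v') := by rw [huvw]
        _ = ((u : ZMod p) ^ (p - 2) * u) * ((w : ZMod p) * v') := by ring
        _ = (v' : ZMod p) * w := by rw [h1, hu1']; ring
    linear_combination hA0 + (k : ZMod p) * hU' - (u : ZMod p) ^ (p - 2) * k * hp0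
  exact hqu.trans (hfin.trans (((hqv.sub hqw).add_right (k * v' * w)).symm))
end
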